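/- arXiv:1707.08590 — 7 statements merged into one kernel-verified Lean document; each statement's English description precedes it below -/
import Mathlib

section
/- Let −1 < σ < 0 and τ > −1. Then there exists a C²-smooth, strictly decreasing function f : [0, 1] → [0, 1] with f(0) = 1, f(1) = 0 and f'' < 0 on [0, 1] (so its graph is concave with both intercepts equal to 1) such that for every ε ∈ (0, 1) there exists r₀ > 0 with the property: for all r ≥ r₀, every s ∈ S(r) satisfies either s < r^{ε−1} or s > r^{1−ε}. -/
open Set Filter Asymptotics MeasureTheory

noncomputable section

/-- The negative part `x⁻ = max(−x, 0)` of a real number. -/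
def nneg (x : ℝ) : ℝ := max (-x) 0

/-- The shifted-lattice counting function `N(r,s)`: the number of points of the
shifted lattice `(ℕ+σ) × (ℕ+τ)` lying inside or on the curve `rΓ(s)`. -/
def countN (f : ℝ → ℝ) (σ τ L r s : ℝ) : ℕ :=
  Set.ncard {p : ℤ × ℤ | 1 ≤ p.1 ∧ 1 ≤ p.2 ∧ ((p.1 : ℝ) + σ) * s / r ≤ L ∧
    (p.2 : ℝ) + τ ≤ r * s * f (((p.1 : ℝ) + σ) * s / r)}

/-- The set `S(r)` of stretch factors `s > 0` maximizing `s ↦ N(r,s)`. -/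
def maximizers (f : ℝ → ℝ) (σ τ L r : ℝ) : Set ℝ :=
  {s | 0 < s ∧ ∀ s' > 0, countN f σ τ L r s' ≤ countN f σ τ L r s}

lemma countN_subset (f : ℝ → ℝ) (σ τ r s : ℝ)
    (hσ : -1 < σ) (hr : 0 < r) (hs : 0 < s)
    (hf1 : ∀ x ∈ Icc (0:ℝ) 1, f x ≤ 1) :
    {p : ℤ × ℤ | 1 ≤ p.1 ∧ 1 ≤ p.2 ∧ ((p.1 : ℝ) + σ) * s / r ≤ 1 ∧
      (p.2 : ℝ) + τ ≤ r * s * f (((p.1 : ℝ) + σ) * s / r)} ⊆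
    ↑(Finset.Icc (1:ℤ) ⌊r/s - σ⌋ ×ˢ Finset.Icc (1:ℤ) ⌊r*s - τ⌋) := by
  rintro ⟨j, k⟩ ⟨h1, h2, h3, h4⟩
  simp only [Finset.coe_product, Set.mem_prod, Finset.mem_coe, Finset.mem_Icc]
  have hj1 : (1:ℝ) ≤ (j:ℝ) := by exact_mod_cast h1
  have hx0 : (0:ℝ) ≤ ((j:ℝ) + σ) * s / r := by
    apply div_nonneg _ hr.le
    apply mul_nonneg _ hs.le
    linarith
  have hjs : ((j:ℝ) + σ) * s ≤ r := by
    rwa [div_le_one hr] at h3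
  have hjle : (j:ℝ) + σ ≤ r / s := by
    rw [le_div_iff₀ hs]; exact hjs
  have hfx : f (((j:ℝ) + σ) * s / r) ≤ 1 := hf1 _ ⟨hx0, h3⟩
  have hk : (k:ℝ) ≤ r * s - τ := by
    have : r * s * f (((j:ℝ) + σ) * s / r) ≤ r * s * 1 := by
      apply mul_le_mul_of_nonneg_left hfx (by positivity)
    nlinarith
  refine ⟨⟨h1, ?_⟩, h2, ?_⟩
  · exact Int.le_floor.2 (by linarith)
  · exact Int.le_floor.2 hk

lemma countN_finite (f : ℝ → ℝ) (σ τ r s : ℝ)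
    (hσ : -1 < σ) (hr : 0 < r) (hs : 0 < s)
    (hf1 : ∀ x ∈ Icc (0:ℝ) 1, f x ≤ 1) :
    {p : ℤ × ℤ | 1 ≤ p.1 ∧ 1 ≤ p.2 ∧ ((p.1 : ℝ) + σ) * s / r ≤ 1 ∧
      (p.2 : ℝ) + τ ≤ r * s * f (((p.1 : ℝ) + σ) * s / r)}.Finite :=
  Set.Finite.subset (Finset.Icc (1:ℤ) ⌊r/s - σ⌋ ×ˢ Finset.Icc (1:ℤ) ⌊r*s - τ⌋).finite_toSet
    (countN_subset f σ τ r s hσ hr hs hf1)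

lemma countN_ub (f : ℝ → ℝ) (σ τ r s : ℝ)
    (hσ : -1 < σ) (hr : 0 < r) (hs : 0 < s)
    (hf1 : ∀ x ∈ Icc (0:ℝ) 1, f x ≤ 1) :
    (countN f σ τ 1 r s : ℝ) ≤ (r/s + 1) * (r*s + |τ| + 1) := by
  have hsub := countN_subset f σ τ r s hσ hr hs hf1
  have hle : countN f σ τ 1 r s ≤
      (Finset.Icc (1:ℤ) ⌊r/s - σ⌋ ×ˢ Finset.Icc (1:ℤ) ⌊r*s - τ⌋).card := by
    rw [countN, ← Set.ncard_coe_finset]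
    exact Set.ncard_le_ncard hsub (Finset.finite_toSet _)
  have hcard : ((Finset.Icc (1:ℤ) ⌊r/s - σ⌋ ×ˢ Finset.Icc (1:ℤ) ⌊r*s - τ⌋).card : ℝ)
      = (⌊r/s - σ⌋.toNat : ℝ) * (⌊r*s - τ⌋.toNat : ℝ) := by
    rw [Finset.card_product, Int.card_Icc, Int.card_Icc]
    push_cast
    norm_num
  have hJ : (⌊r/s - σ⌋.toNat : ℝ) ≤ r/s + 1 := by
    rcases le_or_gt ⌊r/s - σ⌋ 0 with h | h
    · have : ⌊r/s - σ⌋.toNat = 0 := Int.toNat_of_nonpos h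
      rw [this]; push_cast; positivity
    · have h2 := Int.floor_le (r/s - σ)
      have h3 : ((⌊r/s - σ⌋.toNat : ℕ) : ℝ) = ((⌊r/s - σ⌋ : ℤ) : ℝ) := by
        exact_mod_cast congrArg (Int.cast : ℤ → ℝ) (Int.toNat_of_nonneg h.le)
      rw [h3]; linarith
  have hK : (⌊r*s - τ⌋.toNat : ℝ) ≤ r*s + |τ| + 1 := by
    rcases le_or_gt ⌊r*s - τ⌋ 0 with h | h
    · have : ⌊r*s - τ⌋.toNat = 0 := Int.toNat_of_nonpos h
      rw [this]; push_cast
      have := abs_nonneg τ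
      positivity
    · have h1 := Int.floor_le (r*s - τ)
      have h2 := neg_abs_le τ
      have h3 : ((⌊r*s - τ⌋.toNat : ℕ) : ℝ) = ((⌊r*s - τ⌋ : ℤ) : ℝ) := by
        exact_mod_cast congrArg (Int.cast : ℤ → ℝ) (Int.toNat_of_nonneg h.le)
      rw [h3]; linarith
  calc (countN f σ τ 1 r s : ℝ) ≤ _ := by exact_mod_cast hle
    _ = _ := hcard
    _ ≤ (r/s + 1) * (r*s + |τ| + 1) := by
        apply mul_le_mul hJ hK (by positivity) (by positivity)

lemma countN_lb (f : ℝ → ℝ) (σ τ r xs : ℝ)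
    (hσ : -1 < σ) (hr : 0 < r) (hxs0 : 0 < xs) (hxs1 : xs ≤ 1)
    (hf1 : ∀ x ∈ Icc (0:ℝ) 1, f x ≤ 1) :
    r * (xs/(1+σ)*r) * f xs - τ - 1 ≤ (countN f σ τ 1 r (xs/(1+σ)*r) : ℝ) := by
  set s := xs/(1+σ)*r with hs_def
  have h1σ : (0:ℝ) < 1 + σ := by linarith
  have hs0 : 0 < s := by rw [hs_def]; positivity
  have hx1 : ((1:ℝ) + σ) * s / r = xs := by
    rw [hs_def]; field_simp
  set K : ℤ := ⌊r * s * f xs - τ⌋ with hK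
  have hsub : ↑(Finset.Icc (1:ℤ) 1 ×ˢ Finset.Icc (1:ℤ) K) ⊆
      {p : ℤ × ℤ | 1 ≤ p.1 ∧ 1 ≤ p.2 ∧ ((p.1 : ℝ) + σ) * s / r ≤ 1 ∧
        (p.2 : ℝ) + τ ≤ r * s * f (((p.1 : ℝ) + σ) * s / r)} := by
    rintro ⟨j, k⟩ hp
    simp only [Finset.coe_product, Set.mem_prod, Finset.mem_coe, Finset.mem_Icc] at hp
    obtain ⟨⟨hj1, hj2⟩, hk1, hk2⟩ := hp
    have hj : j = 1 := le_antisymm hj2 hj1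
    subst hj
    refine ⟨le_refl _, hk1, ?_, ?_⟩
    · push_cast
      rw [hx1]; exact hxs1
    · push_cast
      rw [hx1]
      have hkle : (k:ℝ) ≤ r*s*f xs - τ := Int.le_floor.1 hk2
      linarith
  have hfin := countN_finite f σ τ r s hσ hr hs0 hf1
  have hcard : (Finset.Icc (1:ℤ) 1 ×ˢ Finset.Icc (1:ℤ) K).card ≤ countN f σ τ 1 r s := by
    rw [countN, ← Set.ncard_coe_finset]
    exact Set.ncard_le_ncard hsub hfin
  have hcardval : ((Finset.Icc (1:ℤ) 1 ×ˢ Finset.Icc (1:ℤ) K).card : ℝ) = (K.toNat : ℝ) := by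
    rw [Finset.card_product, Int.card_Icc, Int.card_Icc]
    norm_num
  have hfl : r * s * f xs - τ - 1 ≤ (K.toNat : ℝ) := by
    have h1 : r*s*f xs - τ - 1 < (K:ℝ) := by
      have := Int.sub_one_lt_floor (r*s*f xs - τ)
      rw [← hK] at this
      linarith
    have h2 : (K:ℝ) ≤ (K.toNat : ℝ) := by exact_mod_cast Int.self_le_toNat K
    linarith
  calc r * s * f xs - τ - 1 ≤ (K.toNat : ℝ) := hfl
    _ = _ := hcardval.symm
    _ ≤ (countN f σ τ 1 r s : ℝ) := by exact_mod_cast hcard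

set_option maxHeartbeats 1000000 in
/-- Negative shift: the optimal concave curve can degenerate. If `−1 < σ < 0` and
`τ > −1`, then there exists a `C²`-smooth, strictly decreasing `f : [0,1] → [0,1]`
with `f(0) = 1`, `f(1) = 0` and `f'' < 0` on `[0,1]` (so its graph is concave with
both intercepts equal to `1`), such that for every `ε ∈ (0,1)` and all large `r`,
every `s ∈ S(r)` satisfies `s < r^{ε−1}` or `s > r^{1−ε}`. -/
theorem optimal_concave_curve_degenerates (σ τ : ℝ)
    (hσ₁ : -1 < σ) (hσ₂ : σ < 0) (hτ : -1 < τ) :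
    ∃ f f' f'' : ℝ → ℝ,
      (∀ x ∈ Icc (0 : ℝ) 1, HasDerivWithinAt f (f' x) (Icc 0 1) x) ∧
      (∀ x ∈ Icc (0 : ℝ) 1, HasDerivWithinAt f' (f'' x) (Icc 0 1) x) ∧
      ContinuousOn f'' (Icc (0 : ℝ) 1) ∧
      StrictAntiOn f (Icc (0 : ℝ) 1) ∧
      f 0 = 1 ∧ f 1 = 0 ∧
      (∀ x ∈ Icc (0 : ℝ) 1, f x ∈ Icc (0 : ℝ) 1) ∧
      (∀ x ∈ Icc (0 : ℝ) 1, f'' x < 0) ∧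
      ∀ ε ∈ Ioo (0 : ℝ) 1, ∃ r₀ > (0 : ℝ), ∀ r ≥ r₀,
        ∀ s ∈ maximizers f σ τ 1 r, s < r ^ (ε - 1) ∨ s > r ^ (1 - ε) := by
  have h1σ : (0:ℝ) < 1 + σ := by linarith
  set a : ℝ := -σ/16 with ha_def
  have ha0 : 0 < a := by rw [ha_def]; linarith
  have ha1 : a < 1 := by rw [ha_def]; linarith
  set xs : ℝ := 1 + σ/2 with hxs_def
  have hxs0 : 0 < xs := by rw [hxs_def]; linarith
  have hxs1 : xs < 1 := by rw [hxs_def]; linarith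
  obtain ⟨n, hn⟩ := exists_pow_lt_of_lt_one ha0 hxs1
  set m : ℕ := n + 2 with hm_def
  have hm2 : 2 ≤ m := by omega
  have hxm : xs ^ m ≤ a := by
    have h1 : xs ^ m ≤ xs ^ n := pow_le_pow_of_le_one hxs0.le hxs1.le (by omega)
    linarith
  clear_value a xs
  set F : ℝ → ℝ := fun x => 1 - a*x^2 - (1-a)*x^m with hF
  have hF1 : ∀ x ∈ Icc (0:ℝ) 1, F x ≤ 1 := by
    intro x hx
    simp only [hF]
    have h1 : (0:ℝ) ≤ a*x^2 := by positivity
    have h2 : (0:ℝ) ≤ (1-a)*x^m := by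
      apply mul_nonneg (by linarith) (pow_nonneg hx.1 m)
    linarith
  refine ⟨F,
      fun x => 0 - a*(((2:ℕ):ℝ)*x^(2-1)) - (1-a)*(((m:ℕ):ℝ)*x^(m-1)),
      fun x => 0 - a*(((2:ℕ):ℝ)*(((2-1:ℕ):ℝ)*x^(2-1-1))) -
        (1-a)*(((m:ℕ):ℝ)*(((m-1:ℕ):ℝ)*x^(m-1-1))),
      ?_, ?_, ?_, ?_, ?_, ?_, ?_, ?_, ?_⟩
  · intro x _
    exact (((hasDerivAt_const x (1:ℝ)).sub
      ((hasDerivAt_pow 2 x).const_mul a)).sub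
      ((hasDerivAt_pow m x).const_mul (1-a))).hasDerivWithinAt
  · intro x _
    exact (((hasDerivAt_const x (0:ℝ)).sub
      (((hasDerivAt_pow (2-1) x).const_mul ((2:ℕ):ℝ)).const_mul a)).sub
      (((hasDerivAt_pow (m-1) x).const_mul ((m:ℕ):ℝ)).const_mul (1-a))).hasDerivWithinAt
  · apply Continuous.continuousOn
    continuity
  · intro x hx y hy hxy
    simp only [hF]
    have h2 : x^2 < y^2 := by
      apply pow_lt_pow_left₀ hxy hx.1
      norm_num
    have hm : x^m < y^m := by
      apply pow_lt_pow_left₀ hxy hx.1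
      omega
    have h3 : a*x^2 < a*y^2 := by nlinarith
    have h4 : (1-a)*x^m ≤ (1-a)*y^m := by nlinarith
    linarith
  · simp only [hF]
    rw [zero_pow (by omega : m ≠ 0)]
    norm_num
  · simp only [hF]
    rw [one_pow]
    ring
  · intro x hx
    simp only [hF]
    constructor
    · have h1 : x^2 ≤ 1 := pow_le_one₀ hx.1 hx.2
      have h2 : x^m ≤ 1 := pow_le_one₀ hx.1 hx.2
      nlinarith
    · have h1 : (0:ℝ) ≤ a*x^2 := by positivity
      have h2 : (0:ℝ) ≤ (1-a)*x^m := mul_nonneg (by linarith) (pow_nonneg hx.1 m)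
      linarith
  · intro x hx
    have hnn : (0:ℝ) ≤ (1-a)*(((m:ℕ):ℝ)*(((m-1:ℕ):ℝ)*x^(m-1-1))) :=
      mul_nonneg (by linarith) (mul_nonneg (Nat.cast_nonneg m)
        (mul_nonneg (Nat.cast_nonneg _) (pow_nonneg hx.1 _)))
    show (0:ℝ) - a*(((2:ℕ):ℝ)*(((2-1:ℕ):ℝ)*x^(2-1-1))) -
        (1-a)*(((m:ℕ):ℝ)*(((m-1:ℕ):ℝ)*x^(m-1-1))) < 0
    have h9 : a*(((2:ℕ):ℝ)*(((2-1:ℕ):ℝ)*x^(2-1-1))) = a*2 := by norm_num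
    rw [h9]
    linarith
  -- main clause
  · intro ε hε
    obtain ⟨hε0, hε1⟩ := hε
    set c : ℝ := ((1+σ/2)*(1+σ/8) - (1+σ))/(1+σ) with hc_def
    have hc0 : 0 < c := by
      rw [hc_def]
      apply div_pos _ h1σ
      nlinarith
    clear_value c
    have hfxs : 1 + σ/8 ≤ F xs := by
      simp only [hF]
      have h1 : xs^2 ≤ 1 := pow_le_one₀ hxs0.le hxs1.le
      have h2 : (0:ℝ) ≤ xs^m := pow_nonneg hxs0.le m
      nlinarith [mul_le_mul_of_nonneg_left h1 ha0.le, mul_nonneg ha0.le h2]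
    have hev1 : ∀ᶠ r : ℝ in atTop, 4*(|τ|+2)/c < r ^ ε :=
      (tendsto_rpow_atTop hε0).eventually_gt_atTop _
    have hev2 : ∀ᶠ r : ℝ in atTop, 2*(2*|τ|+2)/c + 1 < r ^ 2 :=
      (tendsto_pow_atTop two_ne_zero).eventually_gt_atTop _
    have hev3 : ∀ᶠ r : ℝ in atTop, (1:ℝ) ≤ r := eventually_ge_atTop 1
    obtain ⟨r₁, hr₁⟩ := eventually_atTop.mp ((hev1.and hev2).and hev3)
    refine ⟨max r₁ 1, lt_of_lt_of_le zero_lt_one (le_max_right _ _), ?_⟩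
    intro r hr s hsmem
    obtain ⟨⟨hu, hv⟩, hr1⟩ := hr₁ r (le_trans (le_max_left _ _) hr)
    have hr0 : (0:ℝ) < r := lt_of_lt_of_le zero_lt_one hr1
    obtain ⟨hs0, hmax⟩ := hsmem
    by_contra hcon
    push_neg at hcon
    obtain ⟨hsl, hsu⟩ := hcon
    -- upper bound at s
    have hub := countN_ub F σ τ r s hσ₁ hr0 hs0 hF1
    -- lower bound at s* = xs/(1+σ)*r
    have hlb := countN_lb F σ τ r xs hσ₁ hr0 hxs0 hxs1.le hF1
    have hsstar : (0:ℝ) < xs/(1+σ)*r := by positivity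
    have hNle : (countN F σ τ 1 r (xs/(1+σ)*r) : ℝ) ≤ (countN F σ τ 1 r s : ℝ) :=
      Nat.cast_le.2 (hmax _ hsstar)
    -- chain
    have hchain : r * (xs/(1+σ)*r) * F xs - τ - 1 ≤ (r/s + 1)*(r*s + |τ| + 1) := by
      linarith only [hub, hlb, hNle]
    -- lower bound value
    have hFpos : (0:ℝ) < 1 + σ/8 := by linarith
    have hlhs : r^2 * (1 + c) - τ - 1 ≤ r * (xs/(1+σ)*r) * F xs - τ - 1 := by
      have e1 : r * (xs/(1+σ)*r) * F xs = (r^2 * (xs/(1+σ))) * F xs := by ring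
      have e2 : (r^2 * (xs/(1+σ))) * (1 + σ/8) ≤ (r^2 * (xs/(1+σ))) * F xs :=
        mul_le_mul_of_nonneg_left hfxs
          (mul_nonneg (sq_nonneg r) (div_nonneg hxs0.le h1σ.le))
      have e3 : xs/(1+σ) * (1 + σ/8) = 1 + c := by
        rw [hc_def, hxs_def]
        field_simp
        try ring
        try tauto
      have e4 : (r^2 * (xs/(1+σ))) * (1 + σ/8) = r^2 * (1 + c) := by
        rw [← e3]; ring
      rw [e1, ← e4]
      linarith only [e2]
    -- upper bound value
    have hrpos : (0:ℝ) ≤ r := hr0.le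
    have hre1 : r * r^(1-ε) = r^(2-ε) := by
      have : r^(2-ε) = r^(1:ℝ) * r^(1-ε) := by
        rw [← Real.rpow_add hr0]
        congr 1
        ring
      rw [this, Real.rpow_one]
    have hre2 : r / r^(ε-1) = r^(2-ε) := by
      have : r^(2-ε) = r^(1:ℝ) / r^(ε-1) := by
        rw [← Real.rpow_sub hr0]
        congr 1
        ring
      rw [this, Real.rpow_one]
    have hrs : r*s ≤ r^(2-ε) := by
      rw [← hre1]
      exact mul_le_mul_of_nonneg_left hsu hrpos
    have hros : r/s ≤ r^(2-ε) := by
      rw [← hre2]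
      apply div_le_div_of_nonneg_left hrpos (Real.rpow_pos_of_pos hr0 _) hsl
    have hrpow0 : (0:ℝ) ≤ r^(2-ε) := (Real.rpow_pos_of_pos hr0 _).le
    have hexp : (r/s + 1)*(r*s + |τ| + 1)
        = r^2 + (|τ|+1)*(r/s) + r*s + (|τ|+1) := by
      have hsne : s ≠ 0 := ne_of_gt hs0
      field_simp
      try ring
      try tauto
    have hubval : (r/s + 1)*(r*s + |τ| + 1)
        ≤ r^2 + (|τ|+2)*r^(2-ε) + (|τ|+1) := by
      rw [hexp]
      have habs : (0:ℝ) ≤ |τ| := abs_nonneg τ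
      linarith only [hrs, hrpow0, habs,
        mul_le_mul_of_nonneg_left hros (by linarith only [habs] : (0:ℝ) ≤ |τ|+1)]
    -- combine
    have hkey : c * r^2 ≤ (|τ|+2)*r^(2-ε) + 2*|τ| + 2 := by
      have habs : τ ≤ |τ| := le_abs_self τ
      linarith only [hlhs, hchain, hubval, habs]
    -- contradiction
    have hre3 : r^(2-ε) = r^2 / r^ε := by
      have h4 : r^((2:ℝ)-ε) = r^(2:ℝ) / r^ε := Real.rpow_sub hr0 2 ε
      have h5 : r^((2:ℝ)) = r^(2:ℕ) := by
        rw [← Real.rpow_natCast r 2]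
        norm_num
      rw [h4, h5]
    have hu0 : 0 < r^ε := Real.rpow_pos_of_pos hr0 ε
    set u : ℝ := r^ε with hu_def
    set v : ℝ := r^2 with hv_def
    have hv0 : 0 < v := by rw [hv_def]; positivity
    clear_value u v
    have hT0 : (0:ℝ) < |τ|+2 := by positivity
    have hfinal : (|τ|+2)*(v/u) + 2*|τ| + 2 < c*v := by
      have h6 : 4*(|τ|+2) < u*c := by
        rw [div_lt_iff₀ hc0] at hu
        linarith only [hu]
      have hA : (|τ|+2)*(v/u) < c/4*v := by
        rw [mul_div_assoc', div_lt_iff₀ hu0]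
        linarith only [mul_pos hv0 (show (0:ℝ) < u*c - 4*(|τ|+2) by linarith only [h6])]
      have hB : 2*|τ| + 2 < c/2*v := by
        have h7 : 2*(2*|τ|+2)/c < v - 1 := by linarith only [hv]
        have h8 : 2*(2*|τ|+2) < (v-1)*c := (div_lt_iff₀ hc0).1 h7
        linarith only [h8, hc0]
      linarith only [hA, hB, (mul_pos hc0 hv0)]
    rw [hre3] at hkey
    linarith only [hkey, hfinal]
end
end

section
/- Let f(x) = √(1 − x²) on [0, 1] (the quarter unit circle, intercepts L = M = 1), and let σ, τ > −1 satisfy either σ ≤ −2/5 or τ ≤ −2/5. Then for every ε ∈ (0, 1) there exists r₀ > 0 such that for all r ≥ r₀, every s ∈ S(r) satisfies either s < r^{ε−1} or s > r^{1−ε}. -/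
open Set Filter Asymptotics MeasureTheory

noncomputable section

/-! Cut the lattice points into columns: the column over `x = (j + σ) s / r` holds
`⌊r s f(x) - τ⌋₊` points, and comparing these heights with `∫₀^L f` shows that
`N(r,s) ≤ (π/4) r² + r s + r/s + 1` for the quarter circle. When `r^(ε-1) ≤ s ≤ r^(1-ε)` this is
`(π/4 + o(1)) r²`. A degenerate ellipse does better: if `σ ≤ -2/5`, choose `s` so that the first
column stands at `x = 20/29`, where `f = 21/29`; that single column holds about
`(420/841) r² / (1 + σ) ≥ (700/841) r²` points, and `700/841 > π/4`. If `τ ≤ -2/5`, the first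
row does the same. -/

open Finset Real Topology

theorem Nat.lt_floor_iff_add_one_le {R : Type*} [Semiring R] [LinearOrder R]
    [IsStrictOrderedRing R] [FloorSemiring R] {a : R} {n : ℕ} : n < ⌊a⌋₊ ↔ (n : R) + 1 ≤ a := by
  rw [← Nat.add_one_le_iff, Nat.le_floor_iff' n.succ_ne_zero, Nat.cast_add_one]

theorem Nat.floor_sub_le_add_one {R : Type*} [Ring R] [LinearOrder R] [IsStrictOrderedRing R]
    [FloorSemiring R] {x c : R} (hx : 0 ≤ x) (hc : -1 < c) : (⌊x - c⌋₊ : R) ≤ x + 1 := by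
  have hle : x - c ≤ x + 1 := by simpa using sub_le_sub_left hc.le x
  exact (Nat.cast_le.2 (Nat.floor_mono hle)).trans (Nat.floor_le (add_nonneg hx zero_le_one))

theorem add_mul_div_le_iff_le_mul_div_sub {K : Type*} [Field K] [LinearOrder K]
    [IsStrictOrderedRing K] {x σ y r s : K} (hr : 0 < r) (hs : 0 < s) :
    (x + σ) * s / r ≤ y ↔ x ≤ y * r / s - σ := by
  rw [div_le_iff₀ hr, le_sub_iff_add_le, le_div_iff₀ hs]

theorem AntitoneOn.sum_range_floor_le {f : ℝ → ℝ} {L h σ : ℝ}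
    (hf : AntitoneOn f (Icc 0 L)) (hf0 : ∀ x ∈ Icc 0 L, 0 ≤ f x) (hL : 0 ≤ L) (hσ : -1 < σ)
    (hh : 0 < h) :
    ∑ i ∈ range ⌊L / h - σ⌋₊, f ((i + 1 + σ) * h) ≤ f 0 + (∫ x in 0..L, f x) / h := by
  have hint : 0 ≤ ∫ x in 0..L, f x := intervalIntegral.integral_nonneg hL hf0
  have hf0L : 0 ≤ f 0 := hf0 0 ⟨le_rfl, hL⟩
  rcases hn : ⌊L / h - σ⌋₊ with _ | m
  · simp only [range_zero, sum_empty]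
    positivity
  have hc : 0 ≤ (1 + σ) * h := mul_nonneg (by linarith) hh.le
  have hcm : (1 + σ + m) * h ≤ L := by
    have := Nat.lt_floor_iff_add_one_le.1 (hn ▸ m.lt_add_one)
    rw [le_sub_iff_add_le, le_div_iff₀ hh] at this
    linarith
  have hm : (1 + σ) * h ≤ (1 + σ + m) * h :=
    mul_le_mul_of_nonneg_right (by linarith [m.cast_nonneg (α := ℝ)]) hh.le
  have hfirst : f ((1 + σ) * h) ≤ f 0 := hf ⟨le_rfl, hL⟩ ⟨hc, hm.trans hcm⟩ hc
  have hg : AntitoneOn (fun u => f (u * h)) (Icc (1 + σ) (1 + σ + m)) := by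
    intro u hu v hv huv
    have hu' : u * h ∈ Icc 0 L := ⟨by nlinarith [hu.1], by nlinarith [hu.2]⟩
    have hv' : v * h ∈ Icc 0 L := ⟨by nlinarith [hv.1], by nlinarith [hv.2]⟩
    exact hf hu' hv' (by gcongr)
  have hrest : ∑ i ∈ range m, f ((1 + σ + ↑(i + 1)) * h) ≤ (∫ x in 0..L, f x) / h :=
    calc ∑ i ∈ range m, f ((1 + σ + ↑(i + 1)) * h)
        ≤ ∫ u in (1 + σ)..(1 + σ + m), f (u * h) := hg.sum_le_integral
      _ = (∫ x in (1 + σ) * h..(1 + σ + m) * h, f x) / h := by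
          rw [intervalIntegral.integral_comp_mul_right _ hh.ne', smul_eq_mul, inv_mul_eq_div]
      _ ≤ (∫ x in 0..L, f x) / h := by
          gcongr
          refine intervalIntegral.integral_mono_interval hc hm hcm ?_ ?_
          · exact (ae_restrict_mem measurableSet_Ioc).mono
              fun x hx => hf0 x (Ioc_subset_Icc_self hx)
          · exact (hf.mono (uIcc_of_le hL).subset).intervalIntegrable
  have hshift : ∑ i ∈ range m, f ((↑(i + 1) + 1 + σ) * h) =
      ∑ i ∈ range m, f ((1 + σ + ↑(i + 1)) * h) :=
    sum_congr rfl fun i _ => by ring_nf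
  rw [sum_range_succ', hshift, Nat.cast_zero, zero_add]
  linarith

theorem countN_eq_sum_range (f : ℝ → ℝ) (σ τ L : ℝ) {r s : ℝ} (hr : 0 < r) (hs : 0 < s) :
    countN f σ τ L r s = ∑ i ∈ range ⌊L * r / s - σ⌋₊,
      ⌊r * s * f ((i + 1 + σ) * s / r) - τ⌋₊ := by
  classical
  set column : ℕ → Finset (ℤ × ℤ) := fun i =>
    (range ⌊r * s * f ((i + 1 + σ) * s / r) - τ⌋₊).image
      fun k : ℕ => ((i : ℤ) + 1, (k : ℤ) + 1)
  have hset : {p : ℤ × ℤ | 1 ≤ p.1 ∧ 1 ≤ p.2 ∧ ((p.1 : ℝ) + σ) * s / r ≤ L ∧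
      (p.2 : ℝ) + τ ≤ r * s * f (((p.1 : ℝ) + σ) * s / r)} =
      ↑((range ⌊L * r / s - σ⌋₊).biUnion column) := by
    ext ⟨j, k⟩
    simp only [Set.mem_ofPred_eq, Finset.coe_biUnion, Finset.coe_image, Finset.coe_range,
      Set.mem_iUnion, Set.mem_image, Set.mem_Iio, Prod.mk.injEq, column,
      Nat.lt_floor_iff_add_one_le, exists_prop]
    constructor
    · rintro ⟨hj, hk, hjL, hkf⟩
      obtain ⟨i, rfl⟩ : ∃ i : ℕ, j = i + 1 := ⟨(j - 1).toNat, by omega⟩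
      obtain ⟨l, rfl⟩ : ∃ l : ℕ, k = l + 1 := ⟨(k - 1).toNat, by omega⟩
      push_cast at hjL hkf
      exact ⟨i, (add_mul_div_le_iff_le_mul_div_sub hr hs).1 hjL, l, by linarith, rfl, rfl⟩
    · rintro ⟨i, hiL, l, hl, rfl, rfl⟩
      push_cast
      exact ⟨by omega, by omega, (add_mul_div_le_iff_le_mul_div_sub hr hs).2 hiL, by linarith⟩
  have hdisj : (↑(range ⌊L * r / s - σ⌋₊) : Set ℕ).PairwiseDisjoint column := by
    intro i _ i' _ hne
    simp only [column, Function.onFun, Finset.disjoint_left, Finset.mem_image]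
    rintro _ ⟨k, -, rfl⟩ ⟨k', -, hk'⟩
    exact hne (by simp only [Prod.mk.injEq] at hk'; omega)
  rw [countN, hset, Set.ncard_coe_finset, Finset.card_biUnion hdisj]
  refine Finset.sum_congr rfl fun i _ => ?_
  rw [Finset.card_image_of_injective _ (fun k k' h => by simp only [Prod.mk.injEq] at h; omega),
    Finset.card_range]

theorem countN_le_of_antitoneOn {f : ℝ → ℝ} {σ τ L r s : ℝ} (hf : AntitoneOn f (Icc 0 L))
    (hf0 : ∀ x ∈ Icc 0 L, 0 ≤ f x) (hL : 0 ≤ L) (hσ : -1 < σ) (hτ : -1 < τ)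
    (hr : 0 < r) (hs : 0 < s) :
    (countN f σ τ L r s : ℝ) ≤ r ^ 2 * (∫ x in 0..L, f x) + f 0 * (r * s) + L * r / s + 1 := by
  have hrs : L * r / s = L / (s / r) := by field_simp
  have hx : ∀ i ∈ range ⌊L * r / s - σ⌋₊, (i + 1 + σ) * s / r ∈ Icc 0 L := fun i hi => by
    refine ⟨div_nonneg (mul_nonneg (by linarith [i.cast_nonneg (α := ℝ)]) hs.le) hr.le, ?_⟩
    exact (add_mul_div_le_iff_le_mul_div_sub hr hs).2
      (Nat.lt_floor_iff_add_one_le.1 (Finset.mem_range.1 hi))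
  have hcard : (⌊L * r / s - σ⌋₊ : ℝ) ≤ L * r / s + 1 := by
    simpa using Nat.floor_sub_le_add_one (by positivity : 0 ≤ L * r / s) hσ
  have hsum := hf.sum_range_floor_le hf0 hL hσ (div_pos hs hr)
  simp only [← hrs, ← mul_div_assoc] at hsum
  rw [countN_eq_sum_range f σ τ L hr hs]
  push_cast
  calc ∑ i ∈ range ⌊L * r / s - σ⌋₊, (⌊r * s * f ((i + 1 + σ) * s / r) - τ⌋₊ : ℝ)
      ≤ ∑ i ∈ range ⌊L * r / s - σ⌋₊, (r * s * f ((i + 1 + σ) * s / r) + 1) :=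
        sum_le_sum fun i hi => Nat.floor_sub_le_add_one
          (mul_nonneg (by positivity) (hf0 _ (hx i hi))) hτ
    _ = r * s * ∑ i ∈ range ⌊L * r / s - σ⌋₊, f ((i + 1 + σ) * s / r) + ⌊L * r / s - σ⌋₊ := by
        rw [sum_add_distrib, mul_sum, sum_const, card_range, nsmul_one]
    _ ≤ r * s * (f 0 + (∫ x in 0..L, f x) / (s / r)) + (L * r / s + 1) := by gcongr
    _ = r ^ 2 * (∫ x in 0..L, f x) + f 0 * (r * s) + L * r / s + 1 := by
        field_simp
        ring

theorem le_countN_of_column (f : ℝ → ℝ) {σ τ L r s : ℝ} (hr : 0 < r) (hs : 0 < s)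
    (hx : (1 + σ) * s / r ≤ L) :
    ⌊r * s * f ((1 + σ) * s / r) - τ⌋₊ ≤ countN f σ τ L r s := by
  rw [countN_eq_sum_range f σ τ L hr hs]
  have h0 : 0 ∈ range ⌊L * r / s - σ⌋₊ := by
    rw [Finset.mem_range, Nat.lt_floor_iff_add_one_le, Nat.cast_zero, zero_add]
    exact (add_mul_div_le_iff_le_mul_div_sub hr hs).1 hx
  simpa using single_le_sum (f := fun i : ℕ => ⌊r * s * f ((i + 1 + σ) * s / r) - τ⌋₊)
    (fun i _ => Nat.zero_le _) h0

theorem le_countN_of_row {f : ℝ → ℝ} {σ τ L r s x₀ : ℝ} (hf : AntitoneOn f (Icc 0 L))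
    (hσ : -1 < σ) (hr : 0 < r) (hs : 0 < s) (hx₀ : x₀ ∈ Icc 0 L)
    (hrow : 1 + τ ≤ r * s * f x₀) :
    ⌊x₀ * r / s - σ⌋₊ ≤ countN f σ τ L r s := by
  rw [countN_eq_sum_range f σ τ L hr hs]
  have hterm : ∀ i ∈ range ⌊x₀ * r / s - σ⌋₊, 1 ≤ ⌊r * s * f ((i + 1 + σ) * s / r) - τ⌋₊ := by
    intro i hi
    have hxi : (i + 1 + σ) * s / r ≤ x₀ := (add_mul_div_le_iff_le_mul_div_sub hr hs).2
      (Nat.lt_floor_iff_add_one_le.1 (Finset.mem_range.1 hi))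
    have hxi0 : 0 ≤ (i + 1 + σ) * s / r :=
      div_nonneg (mul_nonneg (by linarith [i.cast_nonneg (α := ℝ)]) hs.le) hr.le
    have := hf ⟨hxi0, hxi.trans hx₀.2⟩ hx₀ hxi
    rw [Nat.one_le_floor_iff]
    nlinarith [mul_pos hr hs]
  calc ⌊x₀ * r / s - σ⌋₊ = ∑ i ∈ range ⌊x₀ * r / s - σ⌋₊, 1 := by simp
    _ ≤ ∑ i ∈ range ⌊x₀ * r / s - σ⌋₊, ⌊r * s * f ((i + 1 + σ) * s / r) - τ⌋₊ :=
        sum_le_sum hterm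
    _ ≤ ∑ i ∈ range ⌊L * r / s - σ⌋₊, ⌊r * s * f ((i + 1 + σ) * s / r) - τ⌋₊ := by
        refine sum_le_sum_of_subset (range_subset_range.2 (Nat.floor_mono ?_))
        gcongr
        exact hx₀.2

theorem integral_sqrt_one_sub_sq_zero_one : ∫ x in (0 : ℝ)..1, √(1 - x ^ 2) = π / 4 := by
  have hcont : Continuous fun x : ℝ => √(1 - x ^ 2) := by fun_prop
  have hsymm : ∫ x in (-1 : ℝ)..0, √(1 - x ^ 2) = ∫ x in (0 : ℝ)..1, √(1 - x ^ 2) := by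
    have := intervalIntegral.integral_comp_neg (a := (0 : ℝ)) (b := 1) fun x : ℝ => √(1 - x ^ 2)
    simp only [neg_sq, neg_zero] at this
    exact this.symm
  have := integral_sqrt_one_sub_sq
  rw [← intervalIntegral.integral_add_adjacent_intervals (b := 0)
    (hcont.intervalIntegrable _ _) (hcont.intervalIntegrable _ _), hsymm] at this
  linarith

theorem antitoneOn_sqrt_one_sub_sq : AntitoneOn (fun x : ℝ => √(1 - x ^ 2)) (Icc 0 1) :=
  fun _ hx _ _ hxy => Real.sqrt_le_sqrt (by nlinarith [hx.1])

theorem countN_sqrt_one_sub_sq_le {σ τ r s : ℝ} (hσ : -1 < σ) (hτ : -1 < τ) (hr : 0 < r)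
    (hs : 0 < s) :
    (countN (fun x => √(1 - x ^ 2)) σ τ 1 r s : ℝ) ≤ π / 4 * r ^ 2 + r * s + r / s + 1 := by
  have := countN_le_of_antitoneOn antitoneOn_sqrt_one_sub_sq (fun _ _ => Real.sqrt_nonneg _)
    zero_le_one hσ hτ hr hs
  simp only [integral_sqrt_one_sub_sq_zero_one] at this
  norm_num at this
  linarith

theorem exists_le_countN_sqrt_one_sub_sq {σ τ r : ℝ} (hσ : -1 < σ) (hτ : -1 < τ)
    (hneg : σ ≤ -(2 / 5) ∨ τ ≤ -(2 / 5)) (hr : 0 < r) :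
    ∃ s > 0, 700 / 841 * r ^ 2 - max σ τ - 1 ≤ countN (fun x => √(1 - x ^ 2)) σ τ 1 r s := by
  -- `(20/29, 21/29)` is a rational point of the circle with `x y = 420/841`, just below the
  -- maximum `1/2` of `x √(1 - x²)`.
  have hf : √(1 - (20 / 29 : ℝ) ^ 2) = 21 / 29 := by
    rw [show 1 - (20 / 29 : ℝ) ^ 2 = (21 / 29) ^ 2 by norm_num, Real.sqrt_sq (by norm_num)]
  have hdeg : ∀ a : ℝ, 0 < a → a ≤ 3 / 5 → 700 / 841 * r ^ 2 ≤ 420 / 841 * r ^ 2 / a :=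
    fun a ha ha' => by rw [le_div_iff₀ ha]; nlinarith [sq_nonneg r]
  rcases hneg with hσ' | hτ'
  · have hσ1 : 0 < 1 + σ := by linarith
    have hx : (1 + σ) * (20 / 29 * r / (1 + σ)) / r = 20 / 29 := by field_simp
    refine ⟨20 / 29 * r / (1 + σ), by positivity, ?_⟩
    have hcol := le_countN_of_column (fun x => √(1 - x ^ 2)) (τ := τ) (L := 1) hr (by positivity)
      (hx.trans_le (by norm_num))
    simp only [hx, hf] at hcol
    have hY : r * (20 / 29 * r / (1 + σ)) * (21 / 29) = 420 / 841 * r ^ 2 / (1 + σ) := by ring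
    have := Nat.lt_floor_add_one (r * (20 / 29 * r / (1 + σ)) * (21 / 29) - τ)
    have : (_ : ℝ) ≤ _ := Nat.cast_le.2 hcol
    linarith [hdeg _ hσ1 (by linarith), le_max_right σ τ]
  · have hτ1 : 0 < 1 + τ := by linarith
    have hrow : r * (29 / 21 * (1 + τ) / r) * √(1 - (20 / 29 : ℝ) ^ 2) = 1 + τ := by
      rw [hf]; field_simp
    refine ⟨29 / 21 * (1 + τ) / r, by positivity, ?_⟩
    have hcol := le_countN_of_row antitoneOn_sqrt_one_sub_sq hσ hr (by positivity)
      ⟨by norm_num, by norm_num⟩ hrow.ge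
    have hY : 20 / 29 * r / (29 / 21 * (1 + τ) / r) = 420 / 841 * r ^ 2 / (1 + τ) := by
      field_simp; ring
    have := Nat.lt_floor_add_one (20 / 29 * r / (29 / 21 * (1 + τ) / r) - σ)
    have : (_ : ℝ) ≤ _ := Nat.cast_le.2 hcol
    linarith [hdeg _ hτ1 (by linarith), le_max_left σ τ]

theorem mul_le_rpow_and_div_le_rpow {r s ε : ℝ} (hr : 0 < r) (h₁ : r ^ (ε - 1) ≤ s)
    (h₂ : s ≤ r ^ (1 - ε)) : r * s ≤ r ^ (2 - ε) ∧ r / s ≤ r ^ (2 - ε) := by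
  have hmul : r ^ (2 - ε) = r * r ^ (1 - ε) := by
    rw [show 2 - ε = 1 + (1 - ε) by ring, Real.rpow_add hr, Real.rpow_one]
  have hdiv : r ^ (2 - ε) = r / r ^ (ε - 1) := by
    rw [show 2 - ε = 1 - (ε - 1) by ring, Real.rpow_sub hr, Real.rpow_one]
  refine ⟨hmul ▸ mul_le_mul_of_nonneg_left h₂ hr.le, hdiv ▸ ?_⟩
  exact div_le_div_of_nonneg_left hr.le (Real.rpow_pos_of_pos hr _) h₁

theorem eventually_add_lt_mul_sq {a p : ℝ} (ha : 0 < a) (hp : p < 2) (b c : ℝ) :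
    ∀ᶠ r in atTop, b * r ^ p + c < a * r ^ 2 := by
  have hlim : Tendsto (fun r : ℝ => b * r ^ (-(2 - p)) + c * (r ^ 2)⁻¹) atTop (𝓝 0) := by
    have h₁ := (tendsto_rpow_neg_atTop (by linarith : 0 < 2 - p)).const_mul b
    have h₂ := (tendsto_inv_atTop_zero.comp (tendsto_pow_atTop (α := ℝ) two_ne_zero)).const_mul c
    rw [mul_zero] at h₁ h₂
    simpa only [add_zero, Function.comp_def] using h₁.add h₂
  filter_upwards [hlim.eventually (gt_mem_nhds ha), eventually_gt_atTop 0] with r hr hr0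
  have hpow : r ^ 2 * r ^ (-(2 - p)) = r ^ p := by
    rw [← Real.rpow_natCast, ← Real.rpow_add hr0]
    norm_num
  have hsplit : b * r ^ p + c = r ^ 2 * (b * r ^ (-(2 - p)) + c * (r ^ 2)⁻¹) := by
    rw [← hpow]
    field_simp
  rw [hsplit, mul_comm a]
  exact mul_lt_mul_of_pos_left hr (by positivity)

/-- Negative shift: the optimal ellipse can degenerate. For the quarter unit circle
`f(x) = √(1−x²)` (intercepts `L = M = 1`) and shifts `σ, τ > −1` with `σ ≤ −2/5` or
`τ ≤ −2/5`, for each `ε ∈ (0,1)` one has `S(r) ⊂ (0, r^{ε−1}) ∪ (r^{1−ε}, ∞)` for all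
large `r`. -/
theorem optimal_ellipse_degenerates (σ τ : ℝ)
    (hσ : -1 < σ) (hτ : -1 < τ) (hneg : σ ≤ -(2 / 5) ∨ τ ≤ -(2 / 5)) :
    ∀ ε ∈ Ioo (0 : ℝ) 1, ∃ r₀ > (0 : ℝ), ∀ r ≥ r₀,
      ∀ s ∈ maximizers (fun x => Real.sqrt (1 - x ^ 2)) σ τ 1 r,
        s < r ^ (ε - 1) ∨ s > r ^ (1 - ε) := by
  rintro ε ⟨hε, -⟩
  have hgap : 0 < 700 / 841 - π / 4 := by linarith [pi_lt_d2]
  obtain ⟨r₀, hr₀⟩ := eventually_atTop.1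
    (eventually_add_lt_mul_sq hgap (by linarith : 2 - ε < 2) 2 (max σ τ + 2))
  refine ⟨max r₀ 1, by positivity, fun r hr s hs => ?_⟩
  have hr0 : 0 < r := zero_lt_one.trans_le (le_of_max_le_right hr)
  by_contra! hmid
  obtain ⟨hrs, hrds⟩ := mul_le_rpow_and_div_le_rpow hr0 hmid.1 hmid.2
  obtain ⟨s', hs', hlow⟩ := exists_le_countN_sqrt_one_sub_sq hσ hτ hneg hr0
  have hmax : (_ : ℝ) ≤ _ := Nat.cast_le.2 (hs.2 s' hs')
  have hup := countN_sqrt_one_sub_sq_le hσ hτ hr0 hs.1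
  linarith [hr₀ r (le_of_max_le_left hr)]
end
end

section
/- Suppose f is concave (and strictly decreasing, with intercepts L and M) and σ, τ > −1. If r ≥ (2 + σ + τ)/√(LM), then the function s ↦ N(r, s) attains a positive maximum, and every s ∈ S(r) satisfies (1 + τ)/(rM) ≤ s ≤ rL/(1 + σ). -/
open Set Filter Asymptotics MeasureTheory

noncomputable section

/-- Linear-in-`r` bound on optimal stretch factors for concave curves: if `σ, τ > −1`
and `r ≥ (2+σ+τ)/√(LM)`, then `s ↦ N(r,s)` attains a positive maximum and every
maximizer `s ∈ S(r)` satisfies `(1+τ)/(rM) ≤ s ≤ rL/(1+σ)`. -/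
theorem optimal_stretch_linear_bound_concave (L M σ τ : ℝ) (f : ℝ → ℝ)
    (hL : 0 < L) (hM : 0 < M)
    (hfc : ContinuousOn f (Icc 0 L)) (hfa : StrictAntiOn f (Icc 0 L))
    (hf0 : f 0 = M) (hfL : f L = 0)
    (hconc : ConcaveOn ℝ (Icc 0 L) f)
    (hσ : -1 < σ) (hτ : -1 < τ)
    (r : ℝ) (hr : r ≥ (2 + σ + τ) / Real.sqrt (L * M)) :
    (∃ s ∈ maximizers f σ τ L r, 0 < countN f σ τ L r s) ∧
    ∀ s ∈ maximizers f σ τ L r, (1 + τ) / (r * M) ≤ s ∧ s ≤ r * L / (1 + σ) := by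
  have hσ' : (0:ℝ) < 1 + σ := by linarith
  have hτ' : (0:ℝ) < 1 + τ := by linarith
  have hLM : 0 < L * M := mul_pos hL hM
  have hsq : 0 < Real.sqrt (L * M) := Real.sqrt_pos.mpr hLM
  have hr0 : 0 < r := lt_of_lt_of_le (div_pos (by linarith) hsq) hr
  -- f ≤ M on [0,L]
  have hfM : ∀ x ∈ Icc (0:ℝ) L, f x ≤ M := by
    intro x hx
    have := hfa.antitoneOn (left_mem_Icc.mpr hL.le) hx hx.1
    simpa [hf0] using this
  set A : ℝ → Set (ℤ × ℤ) := fun s =>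
    {p : ℤ × ℤ | 1 ≤ p.1 ∧ 1 ≤ p.2 ∧ ((p.1 : ℝ) + σ) * s / r ≤ L ∧
      (p.2 : ℝ) + τ ≤ r * s * f (((p.1 : ℝ) + σ) * s / r)} with hA
  have hcount : ∀ s, countN f σ τ L r s = (A s).ncard := fun _ => rfl
  -- bounds on points in A s
  have key : ∀ s, 0 < s → ∀ p ∈ A s,
      ((p.1 : ℝ) + σ) * s ≤ r * L ∧ (p.2 : ℝ) + τ ≤ r * s * M := by
    intro s hs p hp
    obtain ⟨h1, h2, h3, h4⟩ := hp
    have h1' : (1:ℝ) ≤ (p.1 : ℝ) := by exact_mod_cast h1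
    have hx0 : 0 ≤ ((p.1 : ℝ) + σ) * s / r := by
      have : (0:ℝ) < (p.1 : ℝ) + σ := by linarith
      positivity
    constructor
    · have := mul_le_mul_of_nonneg_right h3 hr0.le
      rw [div_mul_cancel₀ _ hr0.ne'] at this
      linarith [this]
    · calc (p.2 : ℝ) + τ ≤ r * s * f (((p.1 : ℝ) + σ) * s / r) := h4
        _ ≤ r * s * M := mul_le_mul_of_nonneg_left (hfM _ ⟨hx0, h3⟩)
            (by positivity)
  -- finiteness
  have hfin : ∀ s, 0 < s → (A s).Finite := by
    intro s hs
    apply Set.Finite.subset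
      (((Set.finite_Icc (1:ℤ) ⌊r * L / s - σ⌋).prod
        (Set.finite_Icc (1:ℤ) ⌊r * s * M - τ⌋)))
    intro p hp
    obtain ⟨hb1, hb2⟩ := key s hs p hp
    have hd : ((p.1 : ℝ) + σ) ≤ r * L / s := (le_div_iff₀ hs).mpr hb1
    exact ⟨⟨hp.1, Int.le_floor.mpr (by push_cast; linarith)⟩,
      ⟨hp.2.1, Int.le_floor.mpr (by push_cast; linarith)⟩⟩
  -- nonempty A s forces bounds on s
  have hbnd : ∀ s, 0 < s → (A s).Nonempty →
      (1 + τ) / (r * M) ≤ s ∧ s ≤ r * L / (1 + σ) := by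
    intro s hs ⟨p, hp⟩
    obtain ⟨hb1, hb2⟩ := key s hs p hp
    have h1' : (1:ℝ) ≤ (p.1 : ℝ) := by exact_mod_cast hp.1
    have h2' : (1:ℝ) ≤ (p.2 : ℝ) := by exact_mod_cast hp.2.1
    constructor
    · rw [div_le_iff₀ (mul_pos hr0 hM)]
      nlinarith
    · rw [le_div_iff₀ hσ']
      nlinarith
  -- the special stretch factor s₀
  set s₀ : ℝ := r * L / (2 * (1 + σ)) with hs₀def
  have hs₀ : 0 < s₀ := by positivity
  have hx₀ : ((1:ℝ) + σ) * s₀ / r = L / 2 := by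
    rw [hs₀def]; field_simp
  have hmid : M / 2 ≤ f (L / 2) := by
    have h := hconc.2 (left_mem_Icc.mpr hL.le) (right_mem_Icc.mpr hL.le)
      (by norm_num : (0:ℝ) ≤ 1/2) (by norm_num : (0:ℝ) ≤ 1/2) (by norm_num)
    rw [smul_eq_mul, smul_eq_mul, smul_eq_mul, smul_eq_mul, hf0, hfL] at h
    have : (1/2 : ℝ) * 0 + (1/2 : ℝ) * L = L / 2 := by ring
    rw [this] at h
    linarith
  have hrsq : 4 * (1 + σ) * (1 + τ) ≤ r ^ 2 * (L * M) := by
    have h1 : (2 + σ + τ) ≤ r * Real.sqrt (L * M) := by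
      rw [ge_iff_le, div_le_iff₀ hsq] at hr; linarith
    have h2 : (r * Real.sqrt (L * M)) ^ 2 = r ^ 2 * (L * M) := by
      rw [mul_pow, Real.sq_sqrt hLM.le]
    nlinarith [sq_nonneg (σ - τ), sq_nonneg (2 + σ + τ),
      mul_self_le_mul_self (by linarith : (0:ℝ) ≤ 2 + σ + τ) h1]
  have hmem : ((1:ℤ), (1:ℤ)) ∈ A s₀ := by
    have harg : (((1:ℤ) : ℝ) + σ) * s₀ / r = L / 2 := by push_cast; exact hx₀
    refine ⟨le_refl _, le_refl _, ?_, ?_⟩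
    · rw [harg]; linarith
    · rw [harg]
      have heq : r * s₀ * (M / 2) * (4 * (1 + σ)) = r ^ 2 * (L * M) := by
        rw [hs₀def]; field_simp; ring
      have h1τ : (1 + τ) ≤ r * s₀ * (M / 2) := by
        have h4σ : (0:ℝ) < 4 * (1 + σ) := by linarith
        have := hrsq
        rw [← heq] at this
        nlinarith
      have := mul_le_mul_of_nonneg_left hmid (by positivity : (0:ℝ) ≤ r * s₀)
      push_cast
      linarith
  have hpos0 : 0 < countN f σ τ L r s₀ := by
    rw [hcount]
    exact (Set.ncard_pos (hfin s₀ hs₀)).mpr ⟨_, hmem⟩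
  -- uniform bound
  set lo : ℝ := (1 + τ) / (r * M) with hlo
  set hi : ℝ := r * L / (1 + σ) with hhi
  have hlo0 : 0 < lo := by rw [hlo]; positivity
  set B : ℕ := ((Set.Icc (1:ℤ) ⌊r * L / lo - σ⌋).prod
    (Set.Icc (1:ℤ) ⌊r * hi * M - τ⌋)).ncard with hB
  have hub : ∀ s, 0 < s → countN f σ τ L r s ≤ B := by
    intro s hs
    rcases Nat.eq_zero_or_pos (countN f σ τ L r s) with h | h
    · rw [h]; exact Nat.zero_le _
    · have hne : (A s).Nonempty := by
        rw [hcount] at h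
        exact Set.nonempty_of_ncard_ne_zero h.ne'
      obtain ⟨hslo, hshi⟩ := hbnd s hs hne
      rw [hcount, hB]
      apply Set.ncard_le_ncard _ ((Set.finite_Icc _ _).prod (Set.finite_Icc _ _))
      intro p hp
      obtain ⟨hb1, hb2⟩ := key s hs p hp
      have hd : ((p.1 : ℝ) + σ) ≤ r * L / s := (le_div_iff₀ hs).mpr hb1
      have hd2 : r * L / s ≤ r * L / lo :=
        div_le_div_of_nonneg_left (by positivity) hlo0 hslo
      have hk : (p.2 : ℝ) + τ ≤ r * hi * M := by
        have : r * s * M ≤ r * hi * M := by nlinarith [mul_pos hr0 hM]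
        linarith
      exact ⟨⟨hp.1, Int.le_floor.mpr (by push_cast; linarith)⟩,
        ⟨hp.2.1, Int.le_floor.mpr (by push_cast; linarith)⟩⟩
  -- attainment of the maximum
  set T : Set ℕ := countN f σ τ L r '' Ioi 0 with hT
  have hTne : T.Nonempty := ⟨_, ⟨s₀, hs₀, rfl⟩⟩
  have hTbdd : BddAbove T := by
    refine ⟨B, ?_⟩
    rintro n ⟨s, hs, rfl⟩
    exact hub s hs
  obtain ⟨sm, hsm, hNsm⟩ := Nat.sSup_mem hTne hTbdd
  have hsm0 : 0 < sm := hsm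
  have hmaxm : sm ∈ maximizers f σ τ L r := by
    refine ⟨hsm0, fun s' hs' => ?_⟩
    rw [hNsm]
    exact le_csSup hTbdd ⟨s', hs', rfl⟩
  constructor
  · exact ⟨sm, hmaxm, lt_of_lt_of_le hpos0 (hmaxm.2 s₀ hs₀)⟩
  · intro s hsS
    obtain ⟨hs0, hsmax⟩ := hsS
    have hpos : 0 < countN f σ τ L r s := lt_of_lt_of_le hpos0 (hsmax s₀ hs₀)
    have hne : (A s).Nonempty := by
      rw [hcount] at hpos
      exact Set.nonempty_of_ncard_ne_zero hpos.ne'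
    exact hbnd s hs0 hne
end
end

section
/- Suppose f is concave (and strictly decreasing, with intercepts L and M) and σ, τ > −1. Define C₁ = (1/2)(M − f((1 − σ⁻)L/(2 − σ⁻))) − σ⁻ M − τ⁻ L. Then for all s ≥ 1 and all r ≥ (1 − σ⁻)s/L, the counting function satisfies N(r, s) ≤ r² A − C₁ r s + σ⁻ τ⁻. -/
/-! Write `h = s / r` and `x_j = (j + σ) h`. Column `j` of the lattice holds at most
`r s f(x_j) + τ⁻` points, and only columns `1 ≤ j ≤ J = ⌊L / h - σ⌋` are nonempty, so there are at
most `L / h + σ⁻` of them. Since `f` is concave, the trapezoids over `[x_j, x_{j+1}]` and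
`[0, x_1]` lie under the graph; hence `h ∑ f(x_j) ≤ A - h (M - f(x_J)) / 2 + σ⁻ h M`. The last
column satisfies `x_J > L - h` and `x_J ≥ (1 - σ⁻) h`, so `x_J ≥ (1 - σ⁻) L / (2 - σ⁻)` and
`f(x_J) ≤ f((1 - σ⁻) L / (2 - σ⁻))`; if there is no column at all, `A ≥ L M / 2` and
`r ≥ (1 - σ⁻) s / L` make the right-hand side nonnegative. Multiplying by `r²` gives the bound. -/

open Set Filter Asymptotics MeasureTheory

noncomputable section

theorem ConcaveOn.mul_add_div_two_le_integral {f : ℝ → ℝ} {a b : ℝ} (hab : a ≤ b)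
    (hf : ConcaveOn ℝ (Icc a b) f) (hfc : ContinuousOn f (Icc a b)) :
    (b - a) * (f a + f b) / 2 ≤ ∫ x in a..b, f x := by
  have chord : ∀ t ∈ Icc (0 : ℝ) 1, f a + (f b - f a) * t ≤ f (a + (b - a) * t) := by
    rintro t ⟨ht0, ht1⟩
    have := hf.2 (left_mem_Icc.2 hab) (right_mem_Icc.2 hab) (sub_nonneg.2 ht1) ht0 (by ring)
    simp only [smul_eq_mul] at this
    rw [show a + (b - a) * t = (1 - t) * a + t * b by ring]
    linarith
  have hcomp : ContinuousOn (fun t => f (a + (b - a) * t)) (Icc 0 1) :=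
    hfc.comp (by fun_prop) fun t ⟨ht0, ht1⟩ => ⟨by nlinarith, by nlinarith⟩
  have hchord : ∫ t in (0 : ℝ)..1, (f a + (f b - f a) * t) = (f a + f b) / 2 := by
    rw [intervalIntegral.integral_add intervalIntegrable_const
      (by apply Continuous.intervalIntegrable; fun_prop), intervalIntegral.integral_const,
      intervalIntegral.integral_const_mul, integral_id]
    norm_num
    ring
  calc (b - a) * (f a + f b) / 2 = (b - a) * ∫ t in (0 : ℝ)..1, (f a + (f b - f a) * t) := by
        rw [hchord]; ring
    _ ≤ (b - a) * ∫ t in (0 : ℝ)..1, f (a + (b - a) * t) := by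
        gcongr ?_ * ?_
        exact intervalIntegral.integral_mono_on zero_le_one
          (by apply Continuous.intervalIntegrable; fun_prop)
          (hcomp.intervalIntegrable_of_Icc zero_le_one) chord
    _ = ∫ x in a..b, f x := by simp

theorem ConcaveOn.mul_sum_le_integral_add {f : ℝ → ℝ} {σ h : ℝ} (hh : 0 ≤ h) {m n : ℤ}
    (hmn : m ≤ n) (hf : ConcaveOn ℝ (Icc ((m + σ) * h) ((n + σ) * h)) f)
    (hfc : ContinuousOn f (Icc ((m + σ) * h) ((n + σ) * h))) :
    h * ∑ j ∈ Finset.Icc m n, f ((j + σ) * h) ≤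
      (∫ x in (m + σ) * h..(n + σ) * h, f x) + h / 2 * (f ((m + σ) * h) + f ((n + σ) * h)) := by
  induction n, hmn using Int.leInduction with
  | base =>
    simp only [Finset.Icc_self, Finset.sum_singleton, intervalIntegral.integral_same]
    linarith
  | succ n hmn ih =>
    push_cast at hf hfc ⊢
    have hmid : (n + σ) * h ∈ Icc ((m + σ) * h) ((n + 1 + σ) * h) := by
      have : (m : ℝ) ≤ n := by exact_mod_cast hmn
      constructor <;> nlinarith
    have hleft : Icc ((m + σ) * h) ((n + σ) * h) ⊆ Icc ((m + σ) * h) ((n + 1 + σ) * h) :=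
      Icc_subset_Icc_right hmid.2
    have hright : Icc ((n + σ) * h) ((n + 1 + σ) * h) ⊆ Icc ((m + σ) * h) ((n + 1 + σ) * h) :=
      Icc_subset_Icc_left hmid.1
    have htrap := (hf.subset hright (convex_Icc _ _)).mul_add_div_two_le_integral hmid.2
      (hfc.mono hright)
    have hadd := intervalIntegral.integral_add_adjacent_intervals
      ((hfc.mono hleft).intervalIntegrable_of_Icc (μ := volume) hmid.1)
      ((hfc.mono hright).intervalIntegrable_of_Icc hmid.2)
    have := ih (hf.subset hleft (convex_Icc _ _)) (hfc.mono hleft)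
    rw [← Finset.insert_Icc_right_eq_Icc_add_one (by omega), Finset.sum_insert (by simp), mul_add]
    push_cast
    nlinarith

lemma nneg_nonneg (x : ℝ) : 0 ≤ nneg x := le_max_right _ _

lemma neg_le_nneg (x : ℝ) : -x ≤ nneg x := le_max_left _ _

lemma nneg_lt_one {x : ℝ} (hx : -1 < x) : nneg x < 1 := max_lt (by linarith) one_pos

lemma Nat.cast_floor_le_max (x : ℝ) : (⌊x⌋₊ : ℝ) ≤ max x 0 :=
  (Nat.cast_le.2 (Nat.floor_le_floor (le_max_left _ _))).trans (Nat.floor_le (le_max_right _ _))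

lemma Int.card_Icc_one_floor (x : ℝ) : (Finset.Icc 1 ⌊x⌋).card = ⌊x⌋₊ := by
  rw [Int.card_Icc, add_sub_cancel_right, Int.floor_toNat]

lemma floor_div_sub_add_mul_le {L σ h : ℝ} (hh : 0 < h) : (⌊L / h - σ⌋ + σ) * h ≤ L := by
  rw [← le_div_iff₀ hh]
  linarith [Int.floor_le (L / h - σ)]

lemma lt_floor_div_sub_add_one_add_mul {L σ h : ℝ} (hh : 0 < h) :
    L < (⌊L / h - σ⌋ + 1 + σ) * h := by
  rw [← div_lt_iff₀ hh]
  linarith [Int.lt_floor_add_one (L / h - σ)]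

lemma AntitoneOn.nonneg_of_nonneg_right {f : ℝ → ℝ} {L x : ℝ} (hanti : AntitoneOn f (Icc 0 L))
    (hfL : 0 ≤ f L) (hx : x ∈ Icc 0 L) : 0 ≤ f x :=
  hfL.trans (hanti hx (right_mem_Icc.2 (hx.1.trans hx.2)) hx.2)

section ConcaveDecreasing

variable {f : ℝ → ℝ} {L : ℝ} (hfc : ContinuousOn f (Icc 0 L))
  (hconc : ConcaveOn ℝ (Icc 0 L) f) (hanti : AntitoneOn f (Icc 0 L)) (hfL : 0 ≤ f L)
include hfc hconc hanti hfL

theorem mul_sum_shifted_le_integral {σ h : ℝ} (hσ : -1 < σ) (hh : 0 < h) {n : ℤ} (hn : 1 ≤ n)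
    (hnL : (n + σ) * h ≤ L) :
    h * ∑ j ∈ Finset.Icc 1 n, f ((j + σ) * h) ≤
      (∫ x in 0..(n + σ) * h, f x) - h / 2 * (f 0 - f ((n + σ) * h)) + nneg σ * h * f 0 := by
  have hn' : (1 : ℝ) ≤ n := by exact_mod_cast hn
  have hx1 : (1 + σ) * h ∈ Icc 0 ((n + σ) * h) := ⟨by nlinarith, by nlinarith⟩
  have hsub : Icc 0 ((n + σ) * h) ⊆ Icc 0 L := Icc_subset_Icc_right hnL
  have hleft : Icc 0 ((1 + σ) * h) ⊆ Icc 0 L := (Icc_subset_Icc_right hx1.2).trans hsub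
  have hright : Icc ((1 + σ) * h) ((n + σ) * h) ⊆ Icc 0 L :=
    (Icc_subset_Icc_left hx1.1).trans hsub
  have hfirst := (hconc.subset hleft (convex_Icc _ _)).mul_add_div_two_le_integral hx1.1
    (hfc.mono hleft)
  have hrest := ConcaveOn.mul_sum_le_integral_add hh.le hn
    (by simpa using hconc.subset hright (convex_Icc _ _)) (by simpa using hfc.mono hright)
  have hadd := intervalIntegral.integral_add_adjacent_intervals
    ((hfc.mono hleft).intervalIntegrable_of_Icc (μ := volume) hx1.1)
    ((hfc.mono hright).intervalIntegrable_of_Icc hx1.2)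
  have hx1L : (1 + σ) * h ∈ Icc 0 L := hleft (right_mem_Icc.2 hx1.1)
  have hf1 : 0 ≤ f ((1 + σ) * h) := hanti.nonneg_of_nonneg_right hfL hx1L
  have hf1' : f ((1 + σ) * h) ≤ f 0 := hanti (left_mem_Icc.2 (hx1L.1.trans hx1L.2)) hx1L hx1L.1
  push_cast at hrest
  -- the first column overshoots the trapezoid over `[0, x₁]` by `-σ h (f 0 + f x₁) / 2`
  nlinarith [mul_nonneg (mul_nonneg (by linarith [neg_le_nneg σ] : 0 ≤ nneg σ + σ) hh.le)
      (add_nonneg hf1 (hf1.trans hf1')),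
    mul_nonneg (mul_nonneg (nneg_nonneg σ) hh.le) (sub_nonneg.2 hf1')]

theorem mul_sum_shifted_floor_le_integral {σ h : ℝ} (hσ : -1 < σ) (hh : 0 < h)
    (hhL : (1 - nneg σ) * h ≤ L) :
    h * ∑ j ∈ Finset.Icc 1 ⌊L / h - σ⌋, f ((j + σ) * h) ≤
      (∫ x in 0..L, f x) - h / 2 * (f 0 - f ((1 - nneg σ) * L / (2 - nneg σ)))
        + nneg σ * h * f 0 := by
  set a := nneg σ
  set xs := (1 - a) * L / (2 - a)
  set J := ⌊L / h - σ⌋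
  have ha0 : 0 ≤ a := nneg_nonneg σ
  have ha1 : a < 1 := nneg_lt_one hσ
  have hL : 0 ≤ L := le_trans (by nlinarith) hhL
  have hf0 : 0 ≤ f 0 := hanti.nonneg_of_nonneg_right hfL (left_mem_Icc.2 hL)
  have hxs : xs ∈ Icc 0 L := by
    constructor
    · exact div_nonneg (by nlinarith) (by linarith)
    · rw [div_le_iff₀ (by linarith)]; nlinarith
  have hfxs : 0 ≤ f xs := hanti.nonneg_of_nonneg_right hfL hxs
  have harea : L * f 0 / 2 ≤ ∫ x in 0..L, f x := by
    have := hconc.mul_add_div_two_le_integral hL hfc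
    nlinarith
  rcases lt_or_ge J 1 with hJ0 | hJ0
  · rw [Finset.Icc_eq_empty (by omega), Finset.sum_empty, mul_zero]
    nlinarith [mul_nonneg hh.le hfxs, mul_le_mul_of_nonneg_right hhL hf0,
      mul_nonneg (mul_nonneg ha0 hh.le) hf0]
  · have hJ : (J + σ) * h ≤ L := floor_div_sub_add_mul_le hh
    have hJ1 : L < (J + 1 + σ) * h := lt_floor_div_sub_add_one_add_mul hh
    have hJ' : (1 : ℝ) ≤ J := by exact_mod_cast hJ0
    have hxJ : (J + σ) * h ∈ Icc 0 L := ⟨by nlinarith [neg_le_nneg σ], hJ⟩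
    -- `x_J ≥ (1 - a) h` and `x_J > L - h`, and `xs` is a convex combination of these two bounds
    have hxs_le : xs ≤ (J + σ) * h := by
      rw [div_le_iff₀ (by linarith)]
      nlinarith [neg_le_nneg σ]
    have hsum := mul_sum_shifted_le_integral hfc hconc hanti hfL hσ hh hJ0 hJ
    have hint : (∫ x in 0..(J + σ) * h, f x) ≤ ∫ x in 0..L, f x :=
      intervalIntegral.integral_mono_interval le_rfl hxJ.1 hJ
        ((ae_restrict_iff' measurableSet_Ioc).2 (ae_of_all _ fun x hx =>
          hanti.nonneg_of_nonneg_right hfL (Ioc_subset_Icc_self hx)))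
        (hfc.intervalIntegrable_of_Icc hL)
    have hmono : f ((J + σ) * h) ≤ f xs := hanti hxs hxJ hxs_le
    nlinarith

end ConcaveDecreasing

theorem ncard_le_sum_max {S : Set (ℤ × ℤ)} (I : Finset ℤ) (g : ℤ → ℝ)
    (hS : ∀ p ∈ S, p.1 ∈ I ∧ 1 ≤ p.2 ∧ (p.2 : ℝ) ≤ g p.1) :
    (S.ncard : ℝ) ≤ ∑ j ∈ I, max (g j) 0 := by
  classical
  let B : Finset (ℤ × ℤ) := I.biUnion fun j => {j} ×ˢ Finset.Icc 1 ⌊g j⌋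
  have hSB : S ⊆ B := by
    rintro ⟨j, k⟩ hjk
    obtain ⟨hj, hk1, hk⟩ := hS _ hjk
    simp only [B, Finset.coe_biUnion, Finset.coe_product, Finset.coe_singleton, Finset.coe_Icc,
      mem_iUnion, mem_prod, mem_singleton_iff, mem_Icc, Finset.mem_coe]
    exact ⟨j, hj, rfl, hk1, Int.le_floor.2 hk⟩
  calc (S.ncard : ℝ) ≤ B.card := by
        exact_mod_cast (Set.ncard_le_ncard hSB B.finite_toSet).trans (Set.ncard_coe_finset B).le
    _ ≤ ∑ j ∈ I, (({j} ×ˢ Finset.Icc 1 ⌊g j⌋).card : ℝ) := by exact_mod_cast Finset.card_biUnion_le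
    _ ≤ ∑ j ∈ I, max (g j) 0 := Finset.sum_le_sum fun j _ => by
        rw [Finset.card_product, Finset.card_singleton, one_mul, Int.card_Icc_one_floor]
        exact Nat.cast_floor_le_max _

theorem countN_le_sum_max {f : ℝ → ℝ} {σ τ L r s : ℝ} (hr : 0 < r) (hs : 0 < s) :
    (countN f σ τ L r s : ℝ) ≤
      ∑ j ∈ Finset.Icc 1 ⌊L / (s / r) - σ⌋, max (r * s * f ((j + σ) * (s / r)) - τ) 0 := by
  refine ncard_le_sum_max _ _ ?_
  rintro ⟨j, k⟩ ⟨hj, hk, hjL, hkf⟩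
  rw [mul_div_assoc] at hjL hkf
  refine ⟨Finset.mem_Icc.2 ⟨hj, Int.le_floor.2 ?_⟩, hk, by linarith⟩
  rw [le_sub_iff_add_le, le_div_iff₀ (by positivity)]
  exact hjL

theorem countN_le_mul_sum_add {f : ℝ → ℝ} {σ τ L r s : ℝ} (hL : 0 ≤ L)
    (hanti : AntitoneOn f (Icc 0 L)) (hfL : 0 ≤ f L) (hσ : -1 < σ) (hr : 0 < r) (hs : 0 < s) :
    (countN f σ τ L r s : ℝ) ≤
      r ^ 2 * (s / r * ∑ j ∈ Finset.Icc 1 ⌊L / (s / r) - σ⌋, f ((j + σ) * (s / r)))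
        + nneg τ * (L / (s / r) + nneg σ) := by
  set h := s / r
  set J := ⌊L / h - σ⌋
  have hh : 0 < h := div_pos hs hr
  have hcolumn : ∀ j ∈ Finset.Icc 1 J,
      max (r * s * f ((j + σ) * h) - τ) 0 ≤ r * s * f ((j + σ) * h) + nneg τ := by
    intro j hj
    obtain ⟨hj1, hjJ⟩ := Finset.mem_Icc.1 hj
    have hj1' : (1 : ℝ) ≤ j := by exact_mod_cast hj1
    have hjJ' : (j : ℝ) ≤ J := by exact_mod_cast hjJ
    have hxj : (j + σ) * h ∈ Icc 0 L :=
      ⟨mul_nonneg (by linarith) hh.le, (mul_le_mul_of_nonneg_right (add_le_add_left hjJ' σ)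
        hh.le).trans (floor_div_sub_add_mul_le hh)⟩
    have := hanti.nonneg_of_nonneg_right hfL hxj
    exact max_le (by linarith [neg_le_nneg τ]) (by positivity [nneg_nonneg τ])
  have hcard : ((Finset.Icc 1 J).card : ℝ) ≤ L / h + nneg σ := by
    rw [Int.card_Icc_one_floor]
    exact (Nat.cast_floor_le_max _).trans
      (max_le (by linarith [neg_le_nneg σ]) (by positivity [nneg_nonneg σ]))
  calc (countN f σ τ L r s : ℝ)
      ≤ ∑ j ∈ Finset.Icc 1 J, (r * s * f ((j + σ) * h) + nneg τ) :=
        (countN_le_sum_max hr hs).trans (Finset.sum_le_sum hcolumn)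
    _ = r ^ 2 * (h * ∑ j ∈ Finset.Icc 1 J, f ((j + σ) * h)) + nneg τ * (Finset.Icc 1 J).card := by
        rw [Finset.sum_add_distrib, ← Finset.mul_sum, Finset.sum_const, nsmul_eq_mul]
        simp only [h]
        field_simp
    _ ≤ _ := by gcongr; exact nneg_nonneg τ

theorem counting_upper_bound_concave_general (L M σ τ : ℝ) (f : ℝ → ℝ)
    (hL : 0 < L)
    (hfc : ContinuousOn f (Icc 0 L)) (hfa : StrictAntiOn f (Icc 0 L))
    (hf0 : f 0 = M) (hfL : f L = 0)
    (hconc : ConcaveOn ℝ (Icc 0 L) f)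
    (hσ : -1 < σ) :
    ∀ s ≥ (1 : ℝ), ∀ r ≥ (1 - nneg σ) * s / L,
      (countN f σ τ L r s : ℝ) ≤
        r ^ 2 * (∫ x in (0 : ℝ)..L, f x)
          - (1 / 2 * (M - f ((1 - nneg σ) * L / (2 - nneg σ))) - nneg σ * M - nneg τ * L) * r * s
          + nneg σ * nneg τ := by
  intro s hs r hr
  have hs0 : 0 < s := by linarith
  have hr0 : 0 < r := lt_of_lt_of_le (by positivity [nneg_lt_one hσ]) hr
  have hhL : (1 - nneg σ) * (s / r) ≤ L := by
    rw [ge_iff_le, div_le_iff₀ hL] at hr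
    rw [← mul_div_assoc, div_le_iff₀ hr0]
    linarith
  have hrh : r ^ 2 * (s / r) = r * s := by field_simp
  have hLh : L / (s / r) ≤ L * r * s := by
    rw [div_div_eq_mul_div, div_le_iff₀ hs0]
    nlinarith [mul_le_mul hs hs zero_le_one hs0.le, mul_pos hL hr0]
  calc (countN f σ τ L r s : ℝ)
      ≤ r ^ 2 * (s / r * ∑ j ∈ Finset.Icc 1 ⌊L / (s / r) - σ⌋, f ((j + σ) * (s / r)))
          + nneg τ * (L / (s / r) + nneg σ) :=
        countN_le_mul_sum_add hL.le hfa.antitoneOn hfL.ge hσ hr0 hs0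
    _ ≤ r ^ 2 * ((∫ x in 0..L, f x) - s / r / 2 * (M - f ((1 - nneg σ) * L / (2 - nneg σ)))
          + nneg σ * (s / r) * M) + nneg τ * (L / (s / r) + nneg σ) := by
        rw [← hf0]
        gcongr
        exact mul_sum_shifted_floor_le_integral hfc hconc hfa.antitoneOn hfL.ge hσ
          (by positivity) hhL
    _ ≤ _ := by
        linear_combination mul_le_mul_of_nonneg_left hLh (nneg_nonneg τ) +
          (nneg σ * M - (M - f ((1 - nneg σ) * L / (2 - nneg σ))) / 2) * hrh

/-- Two-term upper bound on the counting function for concave curves: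
`N(r,s) ≤ r² Area(Γ) − C₁ r s + σ⁻ τ⁻` for all `s ≥ 1` and `r ≥ (1−σ⁻)s/L`, where
`C₁ = ½(M − f((1−σ⁻)L/(2−σ⁻))) − σ⁻ M − τ⁻ L`. -/
theorem counting_upper_bound_concave (L M σ τ : ℝ) (f : ℝ → ℝ)
    (hL : 0 < L) (hM : 0 < M)
    (hfc : ContinuousOn f (Icc 0 L)) (hfa : StrictAntiOn f (Icc 0 L))
    (hf0 : f 0 = M) (hfL : f L = 0)
    (hconc : ConcaveOn ℝ (Icc 0 L) f)
    (hσ : -1 < σ) (hτ : -1 < τ) :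
    ∀ s ≥ (1 : ℝ), ∀ r ≥ (1 - nneg σ) * s / L,
      (countN f σ τ L r s : ℝ) ≤
        r ^ 2 * (∫ x in (0 : ℝ)..L, f x)
          - (1 / 2 * (M - f ((1 - nneg σ) * L / (2 - nneg σ))) - nneg σ * M - nneg τ * L) * r * s
          + nneg σ * nneg τ :=
  counting_upper_bound_concave_general L M σ τ f hL hfc hfa hf0 hfL hconc hσ
end
end

section
/- Suppose f is convex (and strictly decreasing, with intercepts L and M) and σ, τ > −1. Define C₂ = (1/2)(1 − σ⁻) f((1 − σ⁻)L/(2 − σ⁻)) − σ⁻ M − τ⁻ L. Then for all s ≥ 1 and all r ≥ (2 − σ⁻)s/L, the counting function satisfies N(r, s) ≤ r² A − C₂ r s + σ⁻ τ⁻. -/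
open Set Filter Asymptotics MeasureTheory

noncomputable section

/-!
Write `h = s / r`, `p = σ⁻`, `A = ∫₀ᴸ f`, and let `g` be `f` cut off to `0` beyond `L`. Column `j`
of the lattice holds at most `r s f((j + σ) h) + τ⁻` points, and `(j + σ) h ≥ (j - p) h`, so
`N(r, s) ≤ r s ∑ⱼ g((j - p) h) + τ⁻ · #columns`.

At every `y ∈ (0, L)` convexity gives a supporting line of `f`; it also lies below `g` beyond `L`,
since its slope is `≤ 0` and its value at `L` is `≤ f L = 0`. Integrating it over the cell of
length `h` centred at `y` gives `h g(y) ≤ ∫ g` over that cell (left Hermite–Hadamard). For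
`p ≤ 1/2` the cells centred at the points `(j - p) h` tile `[(1/2 - p) h, ∞)`, so
`h ∑ⱼ g((j - p) h) ≤ A - ∫₀^{(1/2 - p) h} g ≤ A - (1/2 - p) h f((1 - p) L / (2 - p))`, because `g`
decreases and `(1/2 - p) h ≤ (1 - p) L / (2 - p)` when `(2 - p) h ≤ L`. For `p > 1/2` the first
cell sticks out below `0` and is replaced by `[0, 2 (1 - p) h]`, at a cost of `(2p - 1) h f(0)`.
-/

lemma ConvexOn.add_rightDeriv_mul_sub_le {S : Set ℝ} {f : ℝ → ℝ} {y z : ℝ}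
    (hf : ConvexOn ℝ S f) (hy : y ∈ interior S) (hz : z ∈ S) :
    f y + derivWithin f (Ioi y) y * (z - y) ≤ f z := by
  rcases lt_trichotomy z y with hzy | rfl | hyz
  · have h := (hf.slope_le_leftDeriv_of_mem_interior hz hy hzy).trans
      (hf.leftDeriv_le_rightDeriv_of_mem_interior hy)
    rw [slope_def_field, div_le_iff₀ (sub_pos.2 hzy)] at h
    linarith
  · simp
  · have h := hf.rightDeriv_le_slope_of_mem_interior hy hz hyz
    rw [slope_def_field, le_div_iff₀ (sub_pos.2 hyz)] at h
    linarith

lemma two_mul_le_integral_of_affine_le {g : ℝ → ℝ} {y t m : ℝ} (ht : 0 ≤ t)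
    (hg : IntervalIntegrable g volume (y - t) (y + t))
    (hline : ∀ x ∈ Icc (y - t) (y + t), g y + m * (x - y) ≤ g x) :
    2 * t * g y ≤ ∫ x in (y - t)..(y + t), g x := by
  have hint : ∫ x in (y - t)..(y + t), (g y + m * (x - y)) = 2 * t * g y := by
    rw [intervalIntegral.integral_comp_sub_right (fun x => g y + m * x),
      intervalIntegral.integral_add intervalIntegrable_const
        ((continuous_const_mul m).intervalIntegrable _ _),
      intervalIntegral.integral_const_mul, integral_id, intervalIntegral.integral_const,
      smul_eq_mul]
    ring
  rw [← hint]
  exact intervalIntegral.integral_mono_on (by linarith)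
    (Continuous.intervalIntegrable (by fun_prop) _ _) hg hline

section CutOff

variable {f : ℝ → ℝ} {L : ℝ}

lemma indicator_Iic_eq_zero (hfL : f L = 0) {x : ℝ} (hx : L ≤ x) :
    (Iic L).indicator f x = 0 := by
  rcases hx.eq_or_lt with rfl | hx
  · simp [hfL]
  · exact indicator_of_notMem (notMem_Iic.2 hx) f

lemma indicator_Iic_nonneg (hanti : AntitoneOn f (Icc 0 L)) (hfL : f L = 0) {x : ℝ}
    (hx : 0 ≤ x) : 0 ≤ (Iic L).indicator f x := by
  by_cases hxL : x ≤ L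
  · rw [indicator_of_mem (mem_Iic.2 hxL), ← hfL]
    exact hanti ⟨hx, hxL⟩ ⟨hx.trans hxL, le_rfl⟩ hxL
  · rw [indicator_of_notMem (mt mem_Iic.1 hxL)]

lemma antitoneOn_indicator_Iic (hanti : AntitoneOn f (Icc 0 L)) (hfL : f L = 0) :
    AntitoneOn ((Iic L).indicator f) (Ici 0) := by
  intro x hx z hz hxz
  by_cases hzL : z ≤ L
  · rw [indicator_of_mem (mem_Iic.2 hzL), indicator_of_mem (mem_Iic.2 (hxz.trans hzL))]
    exact hanti ⟨hx, hxz.trans hzL⟩ ⟨hz, hzL⟩ hxz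
  · rw [indicator_of_notMem (mt mem_Iic.1 hzL)]
    exact indicator_Iic_nonneg hanti hfL hx

lemma intervalIntegrable_indicator_Iic (hanti : AntitoneOn f (Icc 0 L)) (hfL : f L = 0)
    {a b : ℝ} (ha : 0 ≤ a) (hb : 0 ≤ b) :
    IntervalIntegrable ((Iic L).indicator f) volume a b :=
  ((antitoneOn_indicator_Iic hanti hfL).mono fun _ hx =>
    (le_min ha hb).trans hx.1).intervalIntegrable

lemma integral_indicator_Iic_le (hanti : AntitoneOn f (Icc 0 L)) (hfL : f L = 0) (hL : 0 ≤ L)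
    {b : ℝ} (hb : 0 ≤ b) :
    ∫ x in 0..b, (Iic L).indicator f x ≤ ∫ x in 0..L, f x := by
  have hint {u v : ℝ} (hu : 0 ≤ u) (hv : 0 ≤ v) :
      IntervalIntegrable ((Iic L).indicator f) volume u v :=
    intervalIntegrable_indicator_Iic hanti hfL hu hv
  calc ∫ x in 0..b, (Iic L).indicator f x
      ≤ ∫ x in 0..max b L, (Iic L).indicator f x :=
        intervalIntegral.integral_mono_interval le_rfl hb (le_max_left b L)
          (ae_restrict_of_forall_mem measurableSet_Ioc fun x hx =>
            indicator_Iic_nonneg hanti hfL hx.1.le)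
          (hint le_rfl (hb.trans (le_max_left b L)))
    _ = (∫ x in 0..L, (Iic L).indicator f x) + ∫ x in L..max b L, (Iic L).indicator f x :=
        (intervalIntegral.integral_add_adjacent_intervals (hint le_rfl hL)
          (hint hL (hL.trans (le_max_right b L)))).symm
    _ = ∫ x in 0..L, f x := by
        have hzero : ∫ x in L..max b L, (Iic L).indicator f x = 0 := by
          rw [intervalIntegral.integral_congr (g := fun _ => 0) fun x hx =>
            indicator_Iic_eq_zero hfL (by rw [uIcc_of_le (le_max_right b L)] at hx; exact hx.1)]
          simp
        have heq : ∫ x in 0..L, (Iic L).indicator f x = ∫ x in 0..L, f x :=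
          intervalIntegral.integral_congr fun x hx =>
            indicator_of_mem (mem_Iic.2 (by rw [uIcc_of_le hL] at hx; exact hx.2)) f
        rw [hzero, heq, add_zero]

lemma mul_le_integral_indicator_Iic (hanti : AntitoneOn f (Icc 0 L)) (hfL : f L = 0)
    {c : ℝ} (hc : 0 ≤ c) :
    c * (Iic L).indicator f c ≤ ∫ x in 0..c, (Iic L).indicator f x := by
  have h := intervalIntegral.integral_mono_on hc intervalIntegrable_const
    (intervalIntegrable_indicator_Iic hanti hfL le_rfl hc)
    fun x hx => antitoneOn_indicator_Iic hanti hfL hx.1 hc hx.2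
  simpa using h

lemma two_mul_le_integral_indicator_Iic (hanti : AntitoneOn f (Icc 0 L)) (hfL : f L = 0)
    (hconv : ConvexOn ℝ (Icc 0 L) f) {y t : ℝ} (ht : 0 ≤ t) (hty : t ≤ y) :
    2 * t * (Iic L).indicator f y ≤ ∫ x in (y - t)..(y + t), (Iic L).indicator f x := by
  have hint : IntervalIntegrable ((Iic L).indicator f) volume (y - t) (y + t) :=
    intervalIntegrable_indicator_Iic hanti hfL (sub_nonneg.2 hty) (by linarith)
  rcases lt_or_ge y L with hyL | hyL
  · rcases (ht.trans hty).eq_or_lt with hy0 | hy0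
    · obtain rfl : t = 0 := le_antisymm (hy0 ▸ hty) ht
      simp
    have hline : ∀ z ∈ Icc 0 L, f y + derivWithin f (Ioi y) y * (z - y) ≤ f z :=
      fun z hz => hconv.add_rightDeriv_mul_sub_le (by simpa using ⟨hy0, hyL⟩) hz
    refine two_mul_le_integral_of_affine_le (m := derivWithin f (Ioi y) y) ht hint fun x hx => ?_
    rw [indicator_of_mem (mem_Iic.2 hyL.le)]
    by_cases hxL : x ≤ L
    · rw [indicator_of_mem (mem_Iic.2 hxL)]
      exact hline x ⟨by linarith [hx.1], hxL⟩
    · rw [indicator_of_notMem (mt mem_Iic.1 hxL)]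
      have hL := hline L (right_mem_Icc.2 (hy0.trans hyL).le)
      rw [hfL] at hL
      have hfy : 0 ≤ f y := by
        simpa [indicator_of_mem (mem_Iic.2 hyL.le)] using indicator_Iic_nonneg hanti hfL hy0.le
      nlinarith
  · rw [indicator_Iic_eq_zero hfL hyL, mul_zero]
    exact intervalIntegral.integral_nonneg (by linarith)
      fun x hx => indicator_Iic_nonneg hanti hfL (by linarith [hx.1])

lemma mul_sum_indicator_Iic_le (hanti : AntitoneOn f (Icc 0 L)) (hfL : f L = 0) (hL : 0 ≤ L)
    (hconv : ConvexOn ℝ (Icc 0 L) f) {a h : ℝ} (hh : 0 < h) (ha : h / 2 ≤ a) (n : ℕ) :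
    h * ∑ i ∈ Finset.range n, (Iic L).indicator f (a + i * h)
      ≤ (∫ x in 0..L, f x) - ∫ x in 0..(a - h / 2), (Iic L).indicator f x := by
  set c : ℕ → ℝ := fun i => a - h / 2 + i * h with hc
  have hc0 : ∀ i, 0 ≤ c i := fun i => by positivity
  have hint : ∀ i j, IntervalIntegrable ((Iic L).indicator f) volume (c i) (c j) :=
    fun i j => intervalIntegrable_indicator_Iic hanti hfL (hc0 i) (hc0 j)
  have hcell : ∀ i : ℕ, h * (Iic L).indicator f (a + i * h)
      ≤ ∫ x in c i..c (i + 1), (Iic L).indicator f x := by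
    intro i
    have := two_mul_le_integral_indicator_Iic hanti hfL hconv (y := a + i * h)
      (half_pos hh).le (by have := i.cast_nonneg (α := ℝ); nlinarith)
    convert this using 2 <;> (try simp only [c]) <;> push_cast <;> ring
  calc h * ∑ i ∈ Finset.range n, (Iic L).indicator f (a + i * h)
      ≤ ∑ i ∈ Finset.range n, ∫ x in c i..c (i + 1), (Iic L).indicator f x := by
        rw [Finset.mul_sum]
        exact Finset.sum_le_sum fun i _ => hcell i
    _ = ∫ x in c 0..c n, (Iic L).indicator f x :=
        intervalIntegral.sum_integral_adjacent_intervals fun i _ => hint i (i + 1)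
    _ ≤ _ := by
        have hsplit := intervalIntegral.integral_add_adjacent_intervals
          (intervalIntegrable_indicator_Iic hanti hfL le_rfl (hc0 0)) (hint 0 n)
        have := integral_indicator_Iic_le hanti hfL hL (hc0 n)
        simp only [hc, Nat.cast_zero, zero_mul, add_zero] at hsplit this ⊢
        linarith

lemma mul_sum_indicator_Iic_le_of_half_lt (hanti : AntitoneOn f (Icc 0 L)) (hfL : f L = 0)
    (hL : 0 ≤ L) (hconv : ConvexOn ℝ (Icc 0 L) f) {p h : ℝ} (hp : 1 / 2 < p) (hp1 : p < 1)
    (hh : 0 < h) (n : ℕ) :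
    h * ∑ i ∈ Finset.range n, (Iic L).indicator f ((1 - p) * h + i * h)
      ≤ (∫ x in 0..L, f x) + (2 * p - 1) * h * f 0 := by
  set y := (1 - p) * h with hy_def
  have hy : 0 < y := mul_pos (by linarith) hh
  have hyh : y ≤ h / 2 := by nlinarith
  have hfirst : 2 * y * (Iic L).indicator f y ≤ ∫ x in 0..(y + h / 2), (Iic L).indicator f x := by
    have hmid := two_mul_le_integral_indicator_Iic hanti hfL hconv hy.le (le_refl y)
    rw [sub_self] at hmid
    refine hmid.trans (intervalIntegral.integral_mono_interval le_rfl (by linarith) (by linarith)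
      (ae_restrict_of_forall_mem measurableSet_Ioc fun x hx =>
        indicator_Iic_nonneg hanti hfL hx.1.le)
      (intervalIntegrable_indicator_Iic hanti hfL le_rfl (by linarith)))
  have hrest := mul_sum_indicator_Iic_le hanti hfL hL hconv (a := y + h) hh (by linarith) n
  rw [show y + h - h / 2 = y + h / 2 by ring] at hrest
  have hfy : (Iic L).indicator f y ≤ f 0 := by
    have := antitoneOn_indicator_Iic hanti hfL (le_refl (0 : ℝ)) hy.le hy.le
    rwa [indicator_of_mem (mem_Iic.2 hL) f] at this
  calc h * ∑ i ∈ Finset.range n, (Iic L).indicator f (y + i * h)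
      ≤ h * ∑ i ∈ Finset.range (n + 1), (Iic L).indicator f (y + i * h) := by
        gcongr
        · exact fun i _ _ =>
            indicator_Iic_nonneg hanti hfL (add_nonneg hy.le (mul_nonneg i.cast_nonneg hh.le))
        · exact n.le_succ
    _ = h * (Iic L).indicator f y
          + h * ∑ i ∈ Finset.range n, (Iic L).indicator f (y + h + i * h) := by
        rw [Finset.sum_range_succ', Nat.cast_zero, zero_mul, add_zero, mul_add, add_comm]
        congr 2
        exact Finset.sum_congr rfl fun i _ => by push_cast; ring_nf
    _ ≤ _ := by
        have := mul_le_mul_of_nonneg_left hfy (mul_nonneg (by linarith) hh.le : 0 ≤ (2 * p - 1) * h)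
        nlinarith

lemma mul_sum_indicator_Iic_shift_le (hanti : AntitoneOn f (Icc 0 L)) (hfL : f L = 0)
    (hL : 0 ≤ L) (hconv : ConvexOn ℝ (Icc 0 L) f) {p h : ℝ} (hp0 : 0 ≤ p) (hp1 : p < 1)
    (hh : 0 < h) (hhL : (2 - p) * h ≤ L) (n : ℕ) :
    h * ∑ i ∈ Finset.range n, (Iic L).indicator f ((i + 1 - p) * h)
      ≤ (∫ x in 0..L, f x) + p * f 0 * h - (1 - p) / 2 * f ((1 - p) * L / (2 - p)) * h := by
  set x₀ := (1 - p) * L / (2 - p) with hx₀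
  have hx₀L : x₀ ≤ L := by rw [hx₀, div_le_iff₀ (by linarith)]; nlinarith
  have hhx₀ : (1 - p) * h ≤ x₀ := by rw [hx₀, le_div_iff₀ (by linarith)]; nlinarith
  have hx₀0 : 0 ≤ x₀ := (mul_nonneg (by linarith) hh.le).trans hhx₀
  have hfx₀ : (Iic L).indicator f x₀ = f x₀ := indicator_of_mem (mem_Iic.2 hx₀L) f
  have hfx₀_nonneg : 0 ≤ f x₀ := hfx₀ ▸ indicator_Iic_nonneg hanti hfL hx₀0
  have hfx₀_le : f x₀ ≤ f 0 := hanti (left_mem_Icc.2 hL) ⟨hx₀0, hx₀L⟩ hx₀0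
  have hshift : ∀ i : ℕ, ((i : ℝ) + 1 - p) * h = (1 - p) * h + i * h := fun i => by ring
  simp only [hshift]
  rcases le_or_gt p (1 / 2) with hp | hp
  · have hc : 0 ≤ (1 / 2 - p) * h := mul_nonneg (by linarith) hh.le
    have hsum := mul_sum_indicator_Iic_le hanti hfL hL hconv (a := (1 - p) * h) hh
      (by nlinarith) n
    rw [show (1 - p) * h - h / 2 = (1 / 2 - p) * h by ring] at hsum
    have hleft := mul_le_integral_indicator_Iic hanti hfL hc
    have hcx₀ : f x₀ ≤ (Iic L).indicator f ((1 / 2 - p) * h) :=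
      hfx₀ ▸ antitoneOn_indicator_Iic hanti hfL hc hx₀0 (by nlinarith)
    have := mul_le_mul_of_nonneg_left hcx₀ hc
    have := mul_le_mul_of_nonneg_left hfx₀_le (mul_nonneg hp0 hh.le)
    have := mul_nonneg (mul_nonneg hp0 hh.le) hfx₀_nonneg
    linarith
  · have hsum := mul_sum_indicator_Iic_le_of_half_lt hanti hfL hL hconv hp hp1 hh n
    have := mul_le_mul_of_nonneg_left hfx₀_le (mul_nonneg (by linarith : 0 ≤ 1 - p) hh.le)
    have := mul_nonneg (mul_nonneg (by linarith : 0 ≤ 1 - p) hh.le) (hfx₀_nonneg.trans hfx₀_le)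
    linarith

end CutOff

lemma ncard_le_sum_of_column_bound {S : Set (ℤ × ℤ)} {n : ℕ} {b : ℕ → ℝ}
    (hb : ∀ i < n, 0 ≤ b i)
    (hS : ∀ z ∈ S, ∃ i < n, z.1 = i + 1 ∧ 1 ≤ z.2 ∧ (z.2 : ℝ) ≤ b i) :
    (S.ncard : ℝ) ≤ ∑ i ∈ Finset.range n, b i := by
  set T := (Finset.range n).biUnion fun i => {((i : ℤ) + 1)} ×ˢ Finset.Icc 1 ⌊b i⌋
  have hST : S ⊆ T := by
    intro z hz
    obtain ⟨i, hi, h1, h2, h3⟩ := hS z hz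
    simp only [T, Finset.coe_biUnion, Finset.coe_range, mem_iUnion, Finset.coe_product,
      Finset.coe_singleton, Finset.coe_Icc, mem_prod, mem_singleton_iff, mem_Icc]
    exact ⟨i, hi, h1, h2, Int.le_floor.2 h3⟩
  calc (S.ncard : ℝ) ≤ T.card := by
        exact_mod_cast (Set.ncard_le_ncard hST T.finite_toSet).trans_eq (ncard_coe_finset T)
    _ ≤ ∑ i ∈ Finset.range n, (({((i : ℤ) + 1)} ×ˢ Finset.Icc 1 ⌊b i⌋).card : ℝ) := by
        exact_mod_cast Finset.card_biUnion_le
    _ = ∑ i ∈ Finset.range n, (⌊b i⌋₊ : ℝ) := by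
        simp [Int.card_Icc, Int.floor_toNat]
    _ ≤ ∑ i ∈ Finset.range n, b i :=
        Finset.sum_le_sum fun i hi => Nat.floor_le (hb i (Finset.mem_range.1 hi))

lemma countN_le_sum {f : ℝ → ℝ} {σ τ L r s : ℝ} (hanti : AntitoneOn f (Icc 0 L))
    (hfL : f L = 0) (hL : 0 ≤ L) (hσ : -1 < σ) (hr : 0 < r) (hs : 0 < s) :
    (countN f σ τ L r s : ℝ) ≤ r * s * ∑ i ∈ Finset.range ⌊L * r / s - σ⌋₊,
        (Iic L).indicator f ((i + 1 - nneg σ) * (s / r))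
      + nneg τ * (L * r / s + nneg σ) := by
  have hσp : -σ ≤ nneg σ := le_max_left _ _
  have hp1 : nneg σ ≤ 1 := max_le (by linarith) zero_le_one
  have hτq : -τ ≤ nneg τ := le_max_left _ _
  have hτ0 : 0 ≤ nneg τ := le_max_right _ _
  have hy : ∀ i : ℕ, 0 ≤ ((i : ℝ) + 1 - nneg σ) * (s / r) := fun i =>
    mul_nonneg (by linarith [i.cast_nonneg (α := ℝ)]) (div_pos hs hr).le
  have hcols : (⌊L * r / s - σ⌋₊ : ℝ) ≤ L * r / s + nneg σ :=
    calc (⌊L * r / s - σ⌋₊ : ℝ) ≤ ⌊L * r / s + nneg σ⌋₊ := by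
          exact_mod_cast Nat.floor_le_floor (by linarith)
      _ ≤ L * r / s + nneg σ := Nat.floor_le (add_nonneg (by positivity) (le_max_right _ _))
  calc (countN f σ τ L r s : ℝ)
      ≤ ∑ i ∈ Finset.range ⌊L * r / s - σ⌋₊,
          (r * s * (Iic L).indicator f ((i + 1 - nneg σ) * (s / r)) + nneg τ) := by
        refine ncard_le_sum_of_column_bound (fun i _ => add_nonneg (mul_nonneg (mul_pos hr hs).le
          (indicator_Iic_nonneg hanti hfL (hy i))) hτ0) ?_
        rintro ⟨j, k⟩ ⟨hj, hk, hxL, hkf⟩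
        obtain ⟨i, rfl⟩ : ∃ i : ℕ, j = i + 1 := ⟨(j - 1).toNat, by omega⟩
        push_cast at hxL hkf ⊢
        refine ⟨i, Nat.lt_of_succ_le (Nat.le_floor ?_), rfl, hk, ?_⟩
        · rw [div_le_iff₀ hr] at hxL
          rw [le_sub_iff_add_le, le_div_iff₀ hs]
          push_cast
          linarith
        have hshift : f ((i + 1 + σ) * s / r)
            ≤ (Iic L).indicator f ((i + 1 - nneg σ) * (s / r)) := by
          rw [← indicator_of_mem (mem_Iic.2 hxL) f]
          refine antitoneOn_indicator_Iic hanti hfL (hy i) ((hy i).trans ?_) ?_ <;>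
          · rw [mul_div_assoc]
            exact mul_le_mul_of_nonneg_right (by linarith) (div_pos hs hr).le
        linarith [mul_le_mul_of_nonneg_left hshift (mul_pos hr hs).le]
    _ ≤ _ := by
        rw [Finset.sum_add_distrib, ← Finset.mul_sum, Finset.sum_const, Finset.card_range,
          nsmul_eq_mul, mul_comm _ (nneg τ)]
        gcongr

theorem counting_upper_bound_convex_general (L M σ τ : ℝ) (f : ℝ → ℝ)
    (hL : 0 < L)
    (hfa : StrictAntiOn f (Icc 0 L))
    (hf0 : f 0 = M) (hfL : f L = 0)
    (hconv : ConvexOn ℝ (Icc 0 L) f)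
    (hσ : -1 < σ) :
    ∀ s ≥ (1 : ℝ), ∀ r ≥ (2 - nneg σ) * s / L,
      (countN f σ τ L r s : ℝ) ≤
        r ^ 2 * (∫ x in (0 : ℝ)..L, f x)
          - (1 / 2 * (1 - nneg σ) * f ((1 - nneg σ) * L / (2 - nneg σ))
              - nneg σ * M - nneg τ * L) * r * s
          + nneg σ * nneg τ := by
  intro s hs r hr
  have hp0 : 0 ≤ nneg σ := le_max_right _ _
  have hp1 : nneg σ < 1 := max_lt (by linarith) one_pos
  have hs0 : 0 < s := one_pos.trans_le hs
  have hr0 : 0 < r := (div_pos (mul_pos (by linarith) hs0) hL).trans_le hr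
  have hhL : (2 - nneg σ) * (s / r) ≤ L := by
    rw [ge_iff_le, div_le_iff₀ hL] at hr
    rw [← mul_div_assoc, div_le_iff₀ hr0]
    linarith
  have hsum := mul_sum_indicator_Iic_shift_le hfa.antitoneOn hfL hL.le hconv hp0 hp1
    (div_pos hs0 hr0) hhL ⌊L * r / s - σ⌋₊
  have hcols : L * r / s ≤ L * r * s :=
    (div_le_self (by positivity) hs).trans (le_mul_of_one_le_right (by positivity) hs)
  calc (countN f σ τ L r s : ℝ)
      ≤ r * s * ∑ i ∈ Finset.range ⌊L * r / s - σ⌋₊,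
          (Iic L).indicator f ((i + 1 - nneg σ) * (s / r)) + nneg τ * (L * r / s + nneg σ) :=
        countN_le_sum hfa.antitoneOn hfL hL.le hσ hr0 hs0
    _ = r ^ 2 * ((s / r) * ∑ i ∈ Finset.range ⌊L * r / s - σ⌋₊,
          (Iic L).indicator f ((i + 1 - nneg σ) * (s / r))) + nneg τ * (L * r / s + nneg σ) := by
        field_simp
    _ ≤ r ^ 2 * ((∫ x in 0..L, f x) + nneg σ * f 0 * (s / r)
            - (1 - nneg σ) / 2 * f ((1 - nneg σ) * L / (2 - nneg σ)) * (s / r))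
          + nneg τ * (L * r * s + nneg σ) := by
        gcongr
        exact le_max_right _ _
    _ = _ := by
        rw [hf0]
        field_simp
        ring

/-- Two-term upper bound on the counting function for convex curves:
`N(r,s) ≤ r² Area(Γ) − C₂ r s + σ⁻ τ⁻` for all `s ≥ 1` and `r ≥ (2−σ⁻)s/L`, where
`C₂ = ½(1−σ⁻) f((1−σ⁻)L/(2−σ⁻)) − σ⁻ M − τ⁻ L`. -/
theorem counting_upper_bound_convex (L M σ τ : ℝ) (f : ℝ → ℝ)
    (hL : 0 < L) (hM : 0 < M)
    (hfc : ContinuousOn f (Icc 0 L)) (hfa : StrictAntiOn f (Icc 0 L))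
    (hf0 : f 0 = M) (hfL : f L = 0)
    (hconv : ConvexOn ℝ (Icc 0 L) f)
    (hσ : -1 < σ) (hτ : -1 < τ) :
    ∀ s ≥ (1 : ℝ), ∀ r ≥ (2 - nneg σ) * s / L,
      (countN f σ τ L r s : ℝ) ≤
        r ^ 2 * (∫ x in (0 : ℝ)..L, f x)
          - (1 / 2 * (1 - nneg σ) * f ((1 - nneg σ) * L / (2 - nneg σ))
              - nneg σ * M - nneg τ * L) * r * s
          + nneg σ * nneg τ :=
  counting_upper_bound_convex_general L M σ τ f hL hfa hf0 hfL hconv hσ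
end
end

section
/- Suppose f is strictly decreasing (with intercepts L and M) and σ, τ > −1. Then for all r, s > 0, the counting function satisfies N(r, s) ≥ r² A − r (s⁻¹ (1 + τ) L + s (1 + σ) M). -/
open Set Filter Asymptotics MeasureTheory

noncomputable section

set_option maxHeartbeats 1600000 in
/-- Rough lower bound for a strictly decreasing curve: the number `N(r,s)` of shifted
lattice points inside `rΓ(s)` satisfies
`N(r,s) ≥ r² Area(Γ) − r (s⁻¹(1+τ)L + s(1+σ)M)` for all `r, s > 0`. -/
theorem counting_lower_bound (L M σ τ : ℝ) (f : ℝ → ℝ)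
    (hL : 0 < L) (hM : 0 < M)
    (hfc : ContinuousOn f (Icc 0 L)) (hfa : StrictAntiOn f (Icc 0 L))
    (hf0 : f 0 = M) (hfL : f L = 0)
    (hσ : -1 < σ) (hτ : -1 < τ) :
    ∀ r > 0, ∀ s > 0,
      (countN f σ τ L r s : ℝ) ≥
        r ^ 2 * (∫ x in (0 : ℝ)..L, f x) - r * (s⁻¹ * (1 + τ) * L + s * (1 + σ) * M) := by
  intro r hr s hs
  have hrs : (0:ℝ) < r * s := mul_pos hr hs
  -- basic facts about f
  have hf_anti : ∀ a ∈ Icc (0:ℝ) L, ∀ b ∈ Icc (0:ℝ) L, a ≤ b → f b ≤ f a := by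
    intro a ha b hb hab
    rcases eq_or_lt_of_le hab with h | h
    · rw [h]
    · exact (hfa ha hb h).le
  have hf_le_M : ∀ t ∈ Icc (0:ℝ) L, f t ≤ M := by
    intro t ht
    have := hf_anti 0 (left_mem_Icc.mpr hL.le) t ht ht.1
    rwa [hf0] at this
  have hf_nonneg : ∀ t ∈ Icc (0:ℝ) L, 0 ≤ f t := by
    intro t ht
    have := hf_anti t ht L (right_mem_Icc.mpr hL.le) ht.2
    rwa [hfL] at this
  have hInt : ∀ a b, a ∈ Icc (0:ℝ) L → b ∈ Icc (0:ℝ) L → IntervalIntegrable f volume a b := by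
    intro a b ha hb
    apply (hfc.mono ?_).intervalIntegrable
    intro t ht
    simp only [Set.uIcc, Set.mem_Icc] at ht ⊢
    exact ⟨le_trans (le_inf ha.1 hb.1) ht.1, le_trans ht.2 (sup_le ha.2 hb.2)⟩
  have hseg : ∀ a b, a ∈ Icc (0:ℝ) L → b ∈ Icc (0:ℝ) L → a ≤ b →
      (∫ t in a..b, f t) ≤ (b - a) * f a := by
    intro a b ha hb hab
    have h1 : (∫ t in a..b, f t) ≤ ∫ _t in a..b, f a := by
      apply intervalIntegral.integral_mono_on hab (hInt a b ha hb) intervalIntegrable_const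
      intro t ht
      exact hf_anti a ha t ⟨le_trans ha.1 ht.1, le_trans ht.2 hb.2⟩ ht.1
    simpa using h1
  set A := (∫ x in (0:ℝ)..L, f x) with hA
  set Jz : ℤ := ⌊r * L / s - σ⌋ with hJz
  by_cases hJ1 : Jz < 1
  · -- trivial case : no admissible column, RHS is negative
    have hLM : A ≤ L * M := by
      have h1 : A ≤ ∫ _x in (0:ℝ)..L, M := by
        apply intervalIntegral.integral_mono_on hL.le
          (hInt 0 L (left_mem_Icc.mpr hL.le) (right_mem_Icc.mpr hL.le)) intervalIntegrable_const
        exact hf_le_M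
      simpa using h1
    have hfl : r * L / s - σ < 1 := by
      have h2 : (Jz:ℝ) ≤ 0 := by exact_mod_cast (by omega : Jz ≤ 0)
      have h4 : r * L / s - σ < (Jz:ℝ) + 1 := Int.lt_floor_add_one _
      linarith
    have hrL : r * L < s * (1 + σ) := by
      have : r * L / s < 1 + σ := by linarith
      calc r * L = (r * L / s) * s := (div_mul_cancel₀ (r * L) hs.ne').symm
        _ < (1 + σ) * s := by exact mul_lt_mul_of_pos_right this hs
        _ = s * (1 + σ) := by ring
    have hτL : 0 ≤ r * (s⁻¹ * (1 + τ) * L) := by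
      apply mul_nonneg hr.le
      apply mul_nonneg (mul_nonneg (inv_nonneg.mpr hs.le) (by linarith)) hL.le
    have hAr : r ^ 2 * A ≤ r ^ 2 * (L * M) := by nlinarith
    have hN : (0:ℝ) ≤ (countN f σ τ L r s : ℝ) := Nat.cast_nonneg _
    have : r ^ 2 * (L * M) < r * (s * (1 + σ) * M) := by
      nlinarith [mul_lt_mul_of_pos_left hrL (mul_pos hr hM)]
    nlinarith
  push_neg at hJ1
  have hJ1R : (1:ℝ) ≤ (Jz:ℝ) := by exact_mod_cast hJ1
  set x : ℤ → ℝ := fun j => ((j:ℝ) + σ) * s / r with hx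
  have hfloor_le : (Jz : ℝ) ≤ r * L / s - σ := Int.floor_le _
  have hfloor_gt : r * L / s - σ < (Jz : ℝ) + 1 := Int.lt_floor_add_one _
  have hx_mem : ∀ j : ℤ, 1 ≤ j → j ≤ Jz → x j ∈ Icc (0:ℝ) L := by
    intro j h1 h2
    have h1R : (1:ℝ) ≤ (j:ℝ) := by exact_mod_cast h1
    have h2R : (j:ℝ) ≤ (Jz:ℝ) := by exact_mod_cast h2
    constructor
    · apply div_nonneg _ hr.le
      nlinarith
    · rw [div_le_iff₀ hr]
      have h3 : (j:ℝ) + σ ≤ r * L / s := by linarith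
      calc ((j:ℝ) + σ) * s ≤ (r * L / s) * s := mul_le_mul_of_nonneg_right h3 hs.le
        _ = L * r := by field_simp
  have hx_mono : ∀ i j : ℤ, i ≤ j → x i ≤ x j := by
    intro i j hij
    have : (i:ℝ) ≤ (j:ℝ) := by exact_mod_cast hij
    simp only [hx]
    gcongr
  -- spacing of lattice columns
  have hx_step : ∀ j : ℤ, x (j+1) = x j + s / r := by
    intro j
    simp only [hx]
    push_cast
    field_simp
    ring
  -- left Riemann sums dominate the integral
  have hRiem : ∀ n : ℤ, 1 ≤ n → n ≤ Jz →
      (∫ t in (x 1)..(x n), f t) ≤ ∑ j ∈ Finset.Ico (1:ℤ) n, s / r * f (x j) := by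
    refine Int.le_induction ?_ ?_
    · intro _
      simp
    · intro n hn IH hsucc
      have hnJ : n ≤ Jz := by omega
      have hm1 : x 1 ∈ Icc (0:ℝ) L := hx_mem 1 le_rfl hJ1
      have hmn : x n ∈ Icc (0:ℝ) L := hx_mem n hn hnJ
      have hmn1 : x (n+1) ∈ Icc (0:ℝ) L := hx_mem (n+1) (by omega) hsucc
      have hsplit : (∫ t in (x 1)..(x n), f t) + (∫ t in (x n)..(x (n+1)), f t)
          = ∫ t in (x 1)..(x (n+1)), f t :=
        intervalIntegral.integral_add_adjacent_intervals (hInt _ _ hm1 hmn) (hInt _ _ hmn hmn1)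
      have hdiff : x (n+1) - x n = s / r := by rw [hx_step n]; ring
      have hlast : (∫ t in (x n)..(x (n+1)), f t) ≤ s / r * f (x n) := by
        have h := hseg (x n) (x (n+1)) hmn hmn1 (hx_mono n (n+1) (by omega))
        rwa [hdiff] at h
      have hset : Finset.Ico (1:ℤ) (n+1) = insert n (Finset.Ico 1 n) := by
        ext m
        simp only [Finset.mem_Ico, Finset.mem_insert]
        omega
      rw [hset, Finset.sum_insert (by simp)]
      linarith [hsplit, hlast, IH hnJ]
  -- the comparison lattice set
  set c : ℤ → ℤ := fun j => ⌊r * s * f (x j) - τ⌋ with hc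
  set T : Finset (ℤ × ℤ) := (Finset.Icc 1 Jz).biUnion
      (fun j => {j} ×ˢ Finset.Icc 1 (c j)) with hT
  have hTcard : T.card = ∑ j ∈ Finset.Icc (1:ℤ) Jz, (c j).toNat := by
    rw [hT, Finset.card_biUnion]
    · apply Finset.sum_congr rfl
      intro j _
      rw [Finset.card_product]
      simp only [Finset.card_singleton, one_mul, Int.card_Icc]
      congr 1
      omega
    · intro a _ b _ hab
      simp only [Finset.disjoint_left]
      rintro ⟨p1, p2⟩ hp hq
      simp only [Finset.mem_product, Finset.mem_singleton] at hp hq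
      exact hab (hp.1 ▸ hq.1 ▸ rfl)
  set Sset : Set (ℤ × ℤ) := {p : ℤ × ℤ | 1 ≤ p.1 ∧ 1 ≤ p.2 ∧ ((p.1 : ℝ) + σ) * s / r ≤ L ∧
    (p.2 : ℝ) + τ ≤ r * s * f (((p.1 : ℝ) + σ) * s / r)} with hSset
  have hcount : countN f σ τ L r s = Sset.ncard := rfl
  have hsub : ↑T ⊆ Sset := by
    intro p hp
    rw [Finset.mem_coe, hT, Finset.mem_biUnion] at hp
    obtain ⟨j, hj, hpj⟩ := hp
    rw [Finset.mem_product, Finset.mem_singleton, Finset.mem_Icc] at hpj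
    rw [Finset.mem_Icc] at hj
    obtain ⟨hpj1, hk1, hk2⟩ := hpj
    have hj1 : 1 ≤ p.1 := hpj1 ▸ hj.1
    have hjJ : p.1 ≤ Jz := hpj1 ▸ hj.2
    have hmem := hx_mem p.1 hj1 hjJ
    refine ⟨hj1, hk1, hmem.2, ?_⟩
    have h1 : ((p.2:ℝ)) ≤ ((c p.1 : ℤ) : ℝ) := by
      exact_mod_cast hpj1 ▸ hk2
    have h2 : ((c p.1 : ℤ) : ℝ) ≤ r * s * f (x p.1) - τ := by
      simp only [hc]
      exact Int.floor_le _
    have : (p.2:ℝ) + τ ≤ r * s * f (x p.1) := by linarith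
    exact this
  set K : ℤ := ⌊r * s * M - τ⌋ with hK
  have hSfin : Sset.Finite := by
    apply Set.Finite.subset (Finset.Icc (1:ℤ) Jz ×ˢ Finset.Icc (1:ℤ) K).finite_toSet
    intro p hp
    obtain ⟨h1, h2, h3, h4⟩ := hp
    rw [Finset.mem_coe, Finset.mem_product, Finset.mem_Icc, Finset.mem_Icc]
    have h1R : (1:ℝ) ≤ (p.1:ℝ) := by exact_mod_cast h1
    refine ⟨⟨h1, ?_⟩, h2, ?_⟩
    · rw [hJz]
      apply Int.le_floor.mpr
      have hle : ((p.1:ℝ) + σ) * s ≤ L * r := (div_le_iff₀ hr).mp h3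
      have hp1 : (p.1:ℝ) + σ ≤ r * L / s := by
        rw [le_div_iff₀ hs]
        nlinarith
      linarith
    · rw [hK]
      apply Int.le_floor.mpr
      have hxm : ((p.1:ℝ) + σ) * s / r ∈ Icc (0:ℝ) L := by
        constructor
        · apply div_nonneg _ hr.le
          nlinarith
        · exact h3
      have hfM := hf_le_M _ hxm
      have h5 : r * s * f (((p.1:ℝ) + σ) * s / r) ≤ r * s * M :=
        mul_le_mul_of_nonneg_left hfM hrs.le
      linarith
  have hcard_le : (∑ j ∈ Finset.Icc (1:ℤ) Jz, (c j).toNat) ≤ countN f σ τ L r s := by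
    rw [hcount, ← hTcard, ← Set.ncard_coe_finset]
    exact Set.ncard_le_ncard hsub hSfin
  -- the real-number estimates
  have hm1 : x 1 ∈ Icc (0:ℝ) L := hx_mem 1 le_rfl hJ1
  have hmJ : x Jz ∈ Icc (0:ℝ) L := hx_mem Jz hJ1 le_rfl
  have h0mem : (0:ℝ) ∈ Icc (0:ℝ) L := left_mem_Icc.mpr hL.le
  have hLmem : L ∈ Icc (0:ℝ) L := right_mem_Icc.mpr hL.le
  have hsplit1 : (∫ t in (0:ℝ)..(x 1), f t) + (∫ t in (x 1)..(x Jz), f t)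
      = ∫ t in (0:ℝ)..(x Jz), f t :=
    intervalIntegral.integral_add_adjacent_intervals (hInt _ _ h0mem hm1) (hInt _ _ hm1 hmJ)
  have hsplit2 : (∫ t in (0:ℝ)..(x Jz), f t) + (∫ t in (x Jz)..L, f t) = A :=
    intervalIntegral.integral_add_adjacent_intervals (hInt _ _ h0mem hmJ) (hInt _ _ hmJ hLmem)
  have hI1 : (∫ t in (0:ℝ)..(x 1), f t) ≤ x 1 * M := by
    have h1 : (∫ t in (0:ℝ)..(x 1), f t) ≤ ∫ _t in (0:ℝ)..(x 1), M := by
      apply intervalIntegral.integral_mono_on hm1.1 (hInt _ _ h0mem hm1) intervalIntegrable_const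
      intro t ht
      exact hf_le_M t ⟨ht.1, le_trans ht.2 hm1.2⟩
    simpa using h1
  have hI3 : (∫ t in (x Jz)..L, f t) ≤ (L - x Jz) * f (x Jz) := hseg _ _ hmJ hLmem hmJ.2
  have hδ0 : 0 ≤ L - x Jz := by linarith [hmJ.2]
  have hδlt : L - x Jz < s / r := by
    have h1 : r * L / s < (Jz:ℝ) + 1 + σ := by linarith
    have h2 : r * L < ((Jz:ℝ) + 1 + σ) * s := by
      calc r * L = (r * L / s) * s := (div_mul_cancel₀ (r * L) hs.ne').symm
        _ < ((Jz:ℝ) + 1 + σ) * s := mul_lt_mul_of_pos_right h1 hs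
    have hxJ : x Jz = ((Jz:ℝ) + σ) * s / r := rfl
    rw [hxJ, sub_lt_iff_lt_add]
    have h4 : s / r + ((Jz:ℝ) + σ) * s / r = (((Jz:ℝ) + σ) * s + s) / r := by ring
    rw [h4, lt_div_iff₀ hr]
    nlinarith
  have hxJid : r * (L - x Jz) / s = r * L / s - ((Jz:ℝ) + σ) := by
    have hxJ : x Jz = ((Jz:ℝ) + σ) * s / r := rfl
    rw [hxJ]
    field_simp
  have hterm : ∀ j : ℤ, r * s * f (x j) - (1 + τ) ≤ ((c j).toNat : ℝ) := by
    intro j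
    have h1 : ((c j : ℤ) : ℝ) ≤ ((c j).toNat : ℝ) := by exact_mod_cast Int.self_le_toNat _
    have h2 : r * s * f (x j) - τ - 1 < ((c j : ℤ) : ℝ) := by
      simp only [hc]
      exact Int.sub_one_lt_floor _
    linarith only [h1, h2]
  have hIccsplit : Finset.Icc (1:ℤ) Jz = insert Jz (Finset.Ico 1 Jz) := by
    ext m
    simp only [Finset.mem_Icc, Finset.mem_insert, Finset.mem_Ico]
    omega
  have hsum : ((∑ j ∈ Finset.Icc (1:ℤ) Jz, (c j).toNat : ℕ) : ℝ)
      = (∑ j ∈ Finset.Ico (1:ℤ) Jz, ((c j).toNat : ℝ)) + ((c Jz).toNat : ℝ) := by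
    rw [hIccsplit, Finset.sum_insert (by simp)]
    push_cast
    ring
  have hsum_Ico : ∑ j ∈ Finset.Ico (1:ℤ) Jz, (r * s * f (x j) - (1 + τ))
      ≤ ∑ j ∈ Finset.Ico (1:ℤ) Jz, ((c j).toNat : ℝ) :=
    Finset.sum_le_sum (fun j _ => hterm j)
  have hcardIco : (((Finset.Ico (1:ℤ) Jz).card : ℕ) : ℝ) = (Jz:ℝ) - 1 := by
    rw [Int.card_Ico]
    have h : ((Jz - 1).toNat : ℤ) = Jz - 1 := Int.toNat_of_nonneg (by omega)
    exact_mod_cast h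
  have hsum_eval : ∑ j ∈ Finset.Ico (1:ℤ) Jz, (r * s * f (x j) - (1 + τ))
      = r ^ 2 * (∑ j ∈ Finset.Ico (1:ℤ) Jz, s / r * f (x j)) - ((Jz:ℝ) - 1) * (1 + τ) := by
    rw [Finset.sum_sub_distrib, Finset.sum_const, Finset.mul_sum, nsmul_eq_mul, hcardIco]
    congr 1
    apply Finset.sum_congr rfl
    intro j _
    field_simp
  have hlastcol : r ^ 2 * ((L - x Jz) * f (x Jz))
      ≤ ((c Jz).toNat : ℝ) + (r * (L - x Jz) / s) * (1 + τ) := by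
    set u := r * (L - x Jz) / s with hu
    have hu0 : 0 ≤ u := div_nonneg (mul_nonneg hr.le hδ0) hs.le
    have hu1 : u ≤ 1 := by
      rw [hu, div_le_one hs]
      have h5 : r * (L - x Jz) < r * (s / r) := mul_lt_mul_of_pos_left hδlt hr
      have h6 : r * (s / r) = s := by field_simp
      linarith only [h5, h6]
    have hF : r * s * f (x Jz) - (1 + τ) ≤ ((c Jz).toNat : ℝ) := hterm Jz
    have hFn : (0:ℝ) ≤ ((c Jz).toNat : ℝ) := Nat.cast_nonneg _
    have hid : r ^ 2 * ((L - x Jz) * f (x Jz)) = u * (r * s * f (x Jz)) := by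
      rw [hu]
      field_simp
    rw [hid]
    nlinarith [mul_nonneg (sub_nonneg.mpr hu1) hFn,
      mul_nonneg hu0 (sub_nonneg.mpr hF)]
  have h1τ : (0:ℝ) ≤ 1 + τ := by linarith
  have hbudget : ((Jz:ℝ) - 1) * (1 + τ) + (r * (L - x Jz) / s) * (1 + τ)
      ≤ r * (s⁻¹ * (1 + τ) * L) := by
    have hkey : (Jz:ℝ) - 1 + r * (L - x Jz) / s ≤ r * L / s := by
      rw [hxJid]
      linarith
    have h2 : ((Jz:ℝ) - 1) * (1 + τ) + (r * (L - x Jz) / s) * (1 + τ)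
        = ((Jz:ℝ) - 1 + r * (L - x Jz) / s) * (1 + τ) := by ring
    have h3 : r * (s⁻¹ * (1 + τ) * L) = (r * L / s) * (1 + τ) := by
      field_simp
    rw [h2, h3]
    exact mul_le_mul_of_nonneg_right hkey h1τ
  have hRiem2 : r ^ 2 * (∫ t in (x 1)..(x Jz), f t)
      ≤ r ^ 2 * ∑ j ∈ Finset.Ico (1:ℤ) Jz, s / r * f (x j) :=
    mul_le_mul_of_nonneg_left (hRiem Jz hJ1 le_rfl) (by positivity)
  have hI1' : r ^ 2 * (∫ t in (0:ℝ)..(x 1), f t) ≤ r * (s * (1 + σ) * M) := by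
    have hx1 : x 1 = ((1:ℝ) + σ) * s / r := by
      simp only [hx]
      norm_num
    calc r ^ 2 * (∫ t in (0:ℝ)..(x 1), f t) ≤ r ^ 2 * (x 1 * M) :=
          mul_le_mul_of_nonneg_left hI1 (by positivity)
      _ = r * (s * (1 + σ) * M) := by
          rw [hx1]
          field_simp
  have hI3' : r ^ 2 * (∫ t in (x Jz)..L, f t)
      ≤ ((c Jz).toNat : ℝ) + (r * (L - x Jz) / s) * (1 + τ) := by
    calc r ^ 2 * (∫ t in (x Jz)..L, f t) ≤ r ^ 2 * ((L - x Jz) * f (x Jz)) :=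
          mul_le_mul_of_nonneg_left hI3 (by positivity)
      _ ≤ _ := hlastcol
  have hfinal : r ^ 2 * A - r * (s⁻¹ * (1 + τ) * L + s * (1 + σ) * M)
      ≤ ((∑ j ∈ Finset.Icc (1:ℤ) Jz, (c j).toNat : ℕ) : ℝ) := by
    rw [hsum]
    have e1 : r ^ 2 * A = r ^ 2 * (∫ t in (0:ℝ)..(x 1), f t)
        + r ^ 2 * (∫ t in (x 1)..(x Jz), f t) + r ^ 2 * (∫ t in (x Jz)..L, f t) := by
      rw [← hsplit2, ← hsplit1]
      ring
    linarith only [hsum_Ico, hsum_eval, hRiem2, hI1', hI3', hbudget, e1]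
  exact le_trans hfinal (by exact_mod_cast hcard_le)
end
end

section
/- Let a, b, s > 0 and let 0 ≤ t ≤ √(ab). If s⁻¹ a + s b ≤ 2√(ab) + t, then |s − √(a/b)| ≤ (3 (ab)^{1/4} / b) √t. -/
/-! Completing the square, `b (s - √(a/b))² = s (s⁻¹ a + s b - 2√(ab))`, turns the hypothesis
into `b (s - √(a/b))² ≤ s t`; the hypothesis also gives `s b ≤ 2√(ab) + t ≤ 3√(ab)`, so
`b² (s - √(a/b))² ≤ 3 √(ab) t ≤ (3 (ab)^{1/4} √t)²`. -/

namespace Real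

theorem mul_sq_sub_sqrt_div_eq {a b s : ℝ} (ha : 0 ≤ a) (hb : 0 < b) (hs : s ≠ 0) :
    b * (s - √(a / b)) ^ 2 = s * (s⁻¹ * a + s * b - 2 * √(a * b)) := by
  have hsqrt : √(a * b) = b * √(a / b) := by
    rw [← sqrt_sq hb.le, ← sqrt_mul (sq_nonneg b), sqrt_sq hb.le]
    congr 1
    field_simp
  have hsq : b * √(a / b) ^ 2 = a := by
    rw [sq_sqrt (div_nonneg ha hb.le)]
    field_simp
  rw [hsqrt]
  field_simp
  linear_combination hsq

theorem rpow_one_fourth_sq {x : ℝ} (hx : 0 ≤ x) : (x ^ ((1 : ℝ) / 4)) ^ 2 = √x := by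
  rw [← rpow_natCast, ← rpow_mul hx, sqrt_eq_rpow]
  norm_num

end Real

/-- Lemma (square-completion estimate): if `a, b, s > 0`, `0 ≤ t ≤ √(ab)` and
`s⁻¹ a + s b ≤ 2√(ab) + t`, then `|s − √(a/b)| ≤ (3 (ab)^{1/4} / b) √t`. -/
theorem square_completion (a b s t : ℝ) (ha : 0 < a) (hb : 0 < b) (hs : 0 < s)
    (ht0 : 0 ≤ t) (ht1 : t ≤ Real.sqrt (a * b))
    (h : s⁻¹ * a + s * b ≤ 2 * Real.sqrt (a * b) + t) :
    |s - Real.sqrt (a / b)| ≤ 3 * (a * b) ^ ((1 : ℝ) / 4) / b * Real.sqrt t := by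
  have hcompleted : b * (s - √(a / b)) ^ 2 ≤ s * t := by
    rw [Real.mul_sq_sub_sqrt_div_eq ha.le hb hs.ne']
    exact mul_le_mul_of_nonneg_left (by linarith) hs.le
  have hsb : s * b ≤ 3 * √(a * b) := by
    have : 0 < s⁻¹ * a := by positivity
    linarith
  apply abs_le_of_sq_le_sq _ (by positivity)
  rw [div_mul_eq_mul_div, div_pow, le_div_iff₀ (by positivity), mul_pow, mul_pow,
    Real.rpow_one_fourth_sq (by positivity), Real.sq_sqrt ht0]
  calc (s - √(a / b)) ^ 2 * b ^ 2 = b * (s - √(a / b)) ^ 2 * b := by ring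
    _ ≤ s * t * b := by gcongr
    _ = s * b * t := by ring
    _ ≤ 3 * √(a * b) * t := by gcongr
    _ ≤ 3 ^ 2 * √(a * b) * t := by gcongr; norm_num
end
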